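/- arXiv:1511.07837 — 7 statements merged into one kernel-verified Lean document; each statement's English description precedes it below -/
import Mathlib

section
/- Let A be a nonzero symmetric positive semidefinite n×n real matrix and b ∈ range(A). Define f(x) = (1/2)xᵀAx − bᵀx and f* = min f. Then for all x ∈ ℝⁿ, ‖∇f(x)‖²/(2‖A‖) ≤ f(x) − f* ≤ (‖A⁺‖/2)‖∇f(x)‖², where ‖A‖ is the largest eigenvalue of A and 1/‖A⁺‖ is the smallest positive eigenvalue of A. -/
/-!
Write `b = A z`. With `e = x - z` one has `f x - f* = ½ eᵀAe` and `∇f x = A e`, so the claim is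
`λ⁺min · eᵀAe ≤ ‖A e‖² ≤ λmax · eᵀAe`. These are the operator inequalities
`λ⁺min • A ≤ A ^ 2 ≤ λmax • A`, which the continuous functional calculus reduces to the scalar
inequalities `λ⁺min μ ≤ μ² ≤ λmax μ` on the spectrum of `A`; there every `μ` is `0`, or lies in
`[λ⁺min, λmax]`.
-/

open Matrix

/-- `f(x) = (1/2) xᵀAx − bᵀx`. -/
noncomputable def quadObj {n : ℕ} (A : Matrix (Fin n) (Fin n) ℝ) (b : Fin n → ℝ)
    (x : Fin n → ℝ) : ℝ :=
  (1 / 2) * (x ⬝ᵥ A.mulVec x) - b ⬝ᵥ x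

open scoped MatrixOrder

namespace Matrix

lemma exists_mulVec_eq_smul_of_mem_spectrum {n R : Type*} [Fintype n] [DecidableEq n] [Field R]
    {A : Matrix n n R} {μ : R} (hμ : μ ∈ spectrum R A) : ∃ v ≠ 0, A *ᵥ v = μ • v := by
  rw [← spectrum_toLin', ← Module.End.hasEigenvalue_iff_mem_spectrum] at hμ
  obtain ⟨v, hv⟩ := hμ.exists_hasEigenvector
  exact ⟨v, hv.2, by simpa using hv.apply_eq_smul⟩

variable {n : Type*} [Fintype n] {A B : Matrix n n ℝ}

lemma dotProduct_mulVec_le_of_le (h : A ≤ B) (x : n → ℝ) :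
    x ⬝ᵥ A *ᵥ x ≤ x ⬝ᵥ B *ᵥ x := by
  simpa [sub_mulVec, dotProduct_sub] using (le_iff.mp h).dotProduct_mulVec_nonneg x

lemma IsHermitian.dotProduct_mulVec_comm (hA : A.IsHermitian) (x y : n → ℝ) :
    x ⬝ᵥ A *ᵥ y = y ⬝ᵥ A *ᵥ x := by
  rw [dotProduct_mulVec, ← mulVec_transpose, (isHermitian_iff_isSymm.mp hA).eq, dotProduct_comm]

variable [DecidableEq n]

lemma IsHermitian.dotProduct_sq_mulVec (hA : A.IsHermitian) (x : n → ℝ) :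
    x ⬝ᵥ (A ^ 2) *ᵥ x = A *ᵥ x ⬝ᵥ A *ᵥ x := by
  rw [sq, ← mulVec_mulVec, hA.dotProduct_mulVec_comm, dotProduct_comm]

lemma PosSemidef.mulVec_dotProduct_mulVec_le (hA : A.PosSemidef) {c : ℝ}
    (h : ∀ μ ∈ spectrum ℝ A, μ ≤ c) (x : n → ℝ) :
    A *ᵥ x ⬝ᵥ A *ᵥ x ≤ c * (x ⬝ᵥ A *ᵥ x) := by
  have hsq : A ^ 2 ≤ c • A := by
    rw [← cfc_pow_id (R := ℝ) A 2 hA.1.isSelfAdjoint,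
      ← cfc_const_mul_id c A hA.1.isSelfAdjoint]
    refine cfc_mono fun μ hμ => ?_
    have := spectrum_nonneg_of_nonneg (nonneg_iff_posSemidef.mpr hA) hμ
    nlinarith [h μ hμ]
  simpa [hA.1.dotProduct_sq_mulVec, smul_mulVec] using dotProduct_mulVec_le_of_le hsq x

lemma PosSemidef.mul_dotProduct_mulVec_le (hA : A.PosSemidef) {c : ℝ}
    (h : ∀ μ ∈ spectrum ℝ A, 0 < μ → c ≤ μ) (x : n → ℝ) :
    c * (x ⬝ᵥ A *ᵥ x) ≤ A *ᵥ x ⬝ᵥ A *ᵥ x := by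
  have hsq : c • A ≤ A ^ 2 := by
    rw [← cfc_pow_id (R := ℝ) A 2 hA.1.isSelfAdjoint,
      ← cfc_const_mul_id c A hA.1.isSelfAdjoint]
    refine cfc_mono fun μ hμ => ?_
    rcases (spectrum_nonneg_of_nonneg (nonneg_iff_posSemidef.mpr hA) hμ).eq_or_lt with h0 | hpos
    · simp [← h0]
    · nlinarith [h μ hμ hpos]
  simpa [hA.1.dotProduct_sq_mulVec, smul_mulVec] using dotProduct_mulVec_le_of_le hsq x

end Matrix

lemma quadObj_sub_quadObj {n : ℕ} {A : Matrix (Fin n) (Fin n) ℝ} (hA : A.IsHermitian)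
    (x z : Fin n → ℝ) :
    quadObj A (A *ᵥ z) x - quadObj A (A *ᵥ z) z = 1 / 2 * ((x - z) ⬝ᵥ A *ᵥ (x - z)) := by
  simp only [quadObj, mulVec_sub, dotProduct_sub, sub_dotProduct, hA.dotProduct_mulVec_comm x z,
    dotProduct_comm (A *ᵥ z)]
  ring

lemma quadObj_le_quadObj {n : ℕ} {A : Matrix (Fin n) (Fin n) ℝ} (hA : A.PosSemidef)
    (x z : Fin n → ℝ) : quadObj A (A *ᵥ z) z ≤ quadObj A (A *ᵥ z) x := by
  have : 0 ≤ (x - z) ⬝ᵥ A *ᵥ (x - z) := by simpa using hA.dotProduct_mulVec_nonneg (x - z)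
  linarith [quadObj_sub_quadObj hA.1 x z]

theorem stmt0_general {n : ℕ} (A : Matrix (Fin n) (Fin n) ℝ) (b : Fin n → ℝ)
    (hA : A.PosSemidef)
    (hb : ∃ z, A.mulVec z = b)
    (lmax lmin : ℝ)
    (hmax_top : ∀ μ : ℝ, (∃ v ≠ (0 : Fin n → ℝ), A.mulVec v = μ • v) → μ ≤ lmax)
    (hmin_pos : 0 < lmin)
    (hmin_bot : ∀ μ : ℝ, 0 < μ → (∃ v ≠ (0 : Fin n → ℝ), A.mulVec v = μ • v) → lmin ≤ μ)
    (fstar : ℝ) (xstar : Fin n → ℝ)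
    (hxstar : quadObj A b xstar = fstar)
    (hmin : ∀ y, fstar ≤ quadObj A b y) :
    ∀ x : Fin n → ℝ,
      ((A.mulVec x - b) ⬝ᵥ (A.mulVec x - b)) / (2 * lmax) ≤ quadObj A b x - fstar ∧
      quadObj A b x - fstar ≤ ((A.mulVec x - b) ⬝ᵥ (A.mulVec x - b)) / (2 * lmin) := by
  obtain ⟨z, rfl⟩ := hb
  have hfstar : fstar = quadObj A (A *ᵥ z) z :=
    le_antisymm (hmin z) (hxstar ▸ quadObj_le_quadObj hA xstar z)
  have hupper := hA.mulVec_dotProduct_mulVec_le (c := lmax) fun μ hμ =>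
    hmax_top μ (exists_mulVec_eq_smul_of_mem_spectrum hμ)
  have hlower := hA.mul_dotProduct_mulVec_le (c := lmin) fun μ hμ hpos =>
    hmin_bot μ hpos (exists_mulVec_eq_smul_of_mem_spectrum hμ)
  intro x
  rw [← mulVec_sub, hfstar, quadObj_sub_quadObj hA.1]
  set e := x - z
  have hq : 0 ≤ e ⬝ᵥ A *ᵥ e := by simpa using hA.dotProduct_mulVec_nonneg e
  have hg : 0 ≤ A *ᵥ e ⬝ᵥ A *ᵥ e := by simpa using dotProduct_self_star_nonneg (A *ᵥ e)
  constructor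
  · rcases le_or_gt lmax 0 with hlmax | hlmax
    · exact (div_nonpos_of_nonneg_of_nonpos hg (by linarith)).trans (by positivity)
    · rw [div_le_iff₀ (by positivity)]
      nlinarith [hupper e]
  · rw [le_div_iff₀ (by positivity)]
    nlinarith [hlower e]

/-- for a nonzero symmetric PSD matrix `A` with `b ∈ range A`,
`‖∇f(x)‖²/(2λmax) ≤ f(x) − f* ≤ ‖∇f(x)‖²/(2λ⁺min)` where `λmax` is the largest
eigenvalue of `A` and `λ⁺min` its smallest positive eigenvalue
(`‖A‖ = λmax`, `‖A⁺‖ = 1/λ⁺min`). -/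
theorem stmt0 {n : ℕ} (A : Matrix (Fin n) (Fin n) ℝ) (b : Fin n → ℝ)
    (hA : A.PosSemidef) (hA0 : A ≠ 0)
    (hb : ∃ z, A.mulVec z = b)
    (lmax lmin : ℝ)
    (hmax_eig : ∃ v ≠ (0 : Fin n → ℝ), A.mulVec v = lmax • v)
    (hmax_top : ∀ μ : ℝ, (∃ v ≠ (0 : Fin n → ℝ), A.mulVec v = μ • v) → μ ≤ lmax)
    (hmin_pos : 0 < lmin)
    (hmin_eig : ∃ v ≠ (0 : Fin n → ℝ), A.mulVec v = lmin • v)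
    (hmin_bot : ∀ μ : ℝ, 0 < μ → (∃ v ≠ (0 : Fin n → ℝ), A.mulVec v = μ • v) → lmin ≤ μ)
    (fstar : ℝ) (xstar : Fin n → ℝ)
    (hxstar : quadObj A b xstar = fstar)
    (hmin : ∀ y, fstar ≤ quadObj A b y) :
    ∀ x : Fin n → ℝ,
      ((A.mulVec x - b) ⬝ᵥ (A.mulVec x - b)) / (2 * lmax) ≤ quadObj A b x - fstar ∧
      quadObj A b x - fstar ≤ ((A.mulVec x - b) ⬝ᵥ (A.mulVec x - b)) / (2 * lmin) :=
  stmt0_general A b hA hb lmax lmin hmax_top hmin_pos hmin_bot fstar xstar hxstar hmin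
end

section
/- Let F(x) = (1/2)xᵀAx − bᵀx + τ‖x‖₁ with A symmetric positive semidefinite, τ ≥ 0, and suppose the set of optimal solutions of min F is nonempty with optimal value F*. Let v(x) denote the minimum-norm subgradient of F at x. Then for any δ ≥ 0 there exists η > 0 such that for all x with F(x) − F* ≤ δ, one has F(x) − F* ≤ η‖v(x)‖². -/
/-!
Let `x⋆` be a minimizer and `g = A x⋆ - b`. Perturbing one coordinate of `x⋆` gives `|gᵢ| ≤ τ`
and `τ |x⋆ᵢ| + gᵢ x⋆ᵢ = 0`, hence
`F y - F⋆ = ½ (y - x⋆)ᵀ A (y - x⋆) + ∑ᵢ (τ |yᵢ| + gᵢ yᵢ)` with all terms nonnegative.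
So `argmin F` is the polyhedron `A y = A x⋆, (gᵢ ± τ) yᵢ ≤ 0`, and a point `x` with
`F x - F⋆ ≤ δ` violates its constraints by at most `C √(F x - F⋆)`: for the equations this is
Cauchy–Schwarz for the semi-inner product `A`, for the inequalities `τ |xᵢ| + gᵢ xᵢ` is itself
one of the terms above. Hoffman's error bound yields a minimizer `y` with
`‖x - y‖ ≤ K C √(F x - F⋆)`, and the subgradient inequality gives
`F x - F⋆ ≤ ⟪v x, x - y⟫ ≤ ‖v x‖ K C √(F x - F⋆)`.
-/

open Matrix

/-- `F(x) = (1/2) xᵀAx − bᵀx + τ‖x‖₁`. -/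
noncomputable def l1QuadObj {n : ℕ} (A : Matrix (Fin n) (Fin n) ℝ) (b : Fin n → ℝ)
    (τ : ℝ) (x : Fin n → ℝ) : ℝ :=
  quadObj A b x + τ * ∑ i, |x i|

/-- The minimum-norm subgradient `v(x)` of `F`, given componentwise. -/
noncomputable def minSubgrad {n : ℕ} (A : Matrix (Fin n) (Fin n) ℝ) (b : Fin n → ℝ)
    (τ : ℝ) (x : Fin n → ℝ) : Fin n → ℝ := fun i =>
  if x i ≠ 0 then (A.mulVec x - b) i + τ * Real.sign (x i)
  else min ((A.mulVec x - b) i + τ) (max 0 ((A.mulVec x - b) i - τ))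

open Filter Topology Set
open scoped InnerProductSpace

section Polyhedron

variable {E ι : Type*} [NormedAddCommGroup E] [InnerProductSpace ℝ E] (M : ι → E) (q : ι → ℝ)

def polyhedron : Set E := {y | ∀ j, ⟪M j, y⟫_ℝ ≤ q j}

lemma convex_polyhedron : Convex ℝ (polyhedron M q) := by
  simp only [polyhedron, ofPred_forall]
  exact convex_iInter fun j => convex_halfSpace_le (innerSL ℝ (M j)).toLinearMap.isLinear (q j)

lemma isClosed_polyhedron : IsClosed (polyhedron M q) := by
  simp only [polyhedron, ofPred_forall]
  exact isClosed_iInter fun j => isClosed_le (by fun_prop) continuous_const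

lemma exists_pos_add_smul_mem_polyhedron [Finite ι] {p v : E} (hp : p ∈ polyhedron M q)
    (hv : ∀ j, ⟪M j, p⟫_ℝ = q j → ⟪M j, v⟫_ℝ ≤ 0) :
    ∃ t : ℝ, 0 < t ∧ p + t • v ∈ polyhedron M q := by
  suffices ∀ᶠ t in 𝓝[>] (0 : ℝ), p + t • v ∈ polyhedron M q from
    (this.and self_mem_nhdsWithin).exists.imp fun t ht => ⟨ht.2, ht.1⟩
  simp only [polyhedron, mem_ofPred_eq, eventually_all, inner_add_right, real_inner_smul_right]
  intro j
  rcases (hp j).eq_or_lt with hj | hj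
  · filter_upwards [self_mem_nhdsWithin] with t (ht : 0 < t)
    nlinarith [hv j hj]
  · have hlim : Tendsto (fun t : ℝ => ⟪M j, p⟫_ℝ + t * ⟪M j, v⟫_ℝ) (𝓝[>] 0) (𝓝 ⟪M j, p⟫_ℝ) :=
      (Continuous.tendsto' (by fun_prop) 0 _ (by simp)).mono_left nhdsWithin_le_nhds
    exact (hlim.eventually (gt_mem_nhds hj)).mono fun _ => le_of_lt

/- `w` ranges over the polar of the cone `⟪M j, ·⟫ ≤ 0, j ∈ I`; the unit vectors in it form a
compact set on which the right-hand side is positive. -/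
lemma exists_pos_mul_norm_le_sum_max_inner [FiniteDimensional ℝ E] (I : Finset ι) :
    ∃ c > 0, ∀ w : E, (∀ v, (∀ j ∈ I, ⟪M j, v⟫_ℝ ≤ 0) → ⟪w, v⟫_ℝ ≤ 0) →
      c * ‖w‖ ≤ ∑ j ∈ I, max 0 ⟪M j, w⟫_ℝ := by
  set f : E → ℝ := fun u => ∑ j ∈ I, max 0 ⟪M j, u⟫_ℝ
  set S := Metric.sphere (0 : E) 1 ∩ {u | ∀ v, (∀ j ∈ I, ⟪M j, v⟫_ℝ ≤ 0) → ⟪u, v⟫_ℝ ≤ 0}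
  have hS : IsCompact S := by
    refine (isCompact_sphere 0 1).inter_right ?_
    simp only [ofPred_forall]
    exact isClosed_iInter fun v => isClosed_iInter fun _ =>
      isClosed_le (by fun_prop) continuous_const
  have hpos : ∀ u ∈ S, 0 < f u := by
    rintro u ⟨hu1, hu⟩
    by_contra! h
    have hMu : ∀ j ∈ I, ⟪M j, u⟫_ℝ ≤ 0 := fun j hj =>
      ((le_max_right _ _).trans (Finset.single_le_sum (f := fun i => max 0 ⟪M i, u⟫_ℝ)
        (fun i _ => le_max_left _ _) hj)).trans h
    have := hu u hMu
    rw [real_inner_self_eq_norm_sq, mem_sphere_zero_iff_norm.1 hu1] at this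
    norm_num at this
  obtain ⟨c, hc, hcS⟩ := hS.exists_forall_le' (by fun_prop : Continuous f).continuousOn hpos
  refine ⟨c, hc, fun w hw => ?_⟩
  rcases eq_or_ne w 0 with rfl | hw0
  · simp
  have hu : ‖w‖⁻¹ • w ∈ S := by
    refine ⟨by simp [norm_smul, hw0], fun v hv => ?_⟩
    rw [real_inner_smul_left]
    exact mul_nonpos_of_nonneg_of_nonpos (by positivity) (hw v hv)
  have hf : f (‖w‖⁻¹ • w) = ‖w‖⁻¹ * f w := by
    simp only [f, real_inner_smul_right, Finset.mul_sum,
      mul_max_of_nonneg _ _ (inv_nonneg.2 (norm_nonneg w)), mul_zero]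
  have := hcS _ hu
  rwa [hf, le_inv_mul_iff₀ (norm_pos_iff.2 hw0), mul_comm] at this

/- Hoffman's error bound. If `p` is the projection of `x`, then `x - p` is in the polar of the
cone of feasible directions at `p`, which is cut out by the constraints active at `p`. -/
theorem exists_norm_sub_le_mul_of_inner_sub_le [FiniteDimensional ℝ E] [Fintype ι]
    (hne : (polyhedron M q).Nonempty) :
    ∃ K, ∀ x r, 0 ≤ r → (∀ j, ⟪M j, x⟫_ℝ - q j ≤ r) →
      ∃ y ∈ polyhedron M q, ‖x - y‖ ≤ K * r := by
  classical
  choose c hc hcI using fun I : Finset ι => exists_pos_mul_norm_le_sum_max_inner M I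
  obtain ⟨I₀, -, hI₀⟩ := Finset.univ.exists_min_image c Finset.univ_nonempty
  refine ⟨Fintype.card ι / c I₀, fun x r hr hres => ?_⟩
  obtain ⟨p, hp, hpx⟩ := exists_norm_eq_iInf_of_complete_convex hne
    (isClosed_polyhedron M q).isComplete (convex_polyhedron M q) x
  rw [norm_eq_iInf_iff_real_inner_le_zero (convex_polyhedron M q) hp] at hpx
  set I := Finset.univ.filter fun j => ⟪M j, p⟫_ℝ = q j
  have hnormal : ∀ v, (∀ j ∈ I, ⟪M j, v⟫_ℝ ≤ 0) → ⟪x - p, v⟫_ℝ ≤ 0 := by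
    intro v hv
    obtain ⟨t, ht, htP⟩ := exists_pos_add_smul_mem_polyhedron M q hp
      fun j hj => hv j (Finset.mem_filter.2 ⟨Finset.mem_univ j, hj⟩)
    have := hpx _ htP
    rw [add_sub_cancel_left, real_inner_smul_right] at this
    exact nonpos_of_mul_nonpos_right this ht
  have hsum : ∑ j ∈ I, max 0 ⟪M j, x - p⟫_ℝ ≤ Fintype.card ι * r :=
    calc ∑ j ∈ I, max 0 ⟪M j, x - p⟫_ℝ ≤ ∑ j ∈ I, r :=
          Finset.sum_le_sum fun j hj => max_le hr <| by
            rw [inner_sub_right, (Finset.mem_filter.1 hj).2]; exact hres j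
      _ ≤ Fintype.card ι * r := by
          rw [Finset.sum_const, nsmul_eq_mul]; gcongr; exact Finset.card_le_univ I
  refine ⟨p, hp, ?_⟩
  rw [div_mul_eq_mul_div, le_div_iff₀ (hc I₀), mul_comm]
  calc c I₀ * ‖x - p‖ ≤ c I * ‖x - p‖ := by gcongr; exact hI₀ I (Finset.mem_univ _)
    _ ≤ _ := (hcI I _ hnormal).trans hsum

end Polyhedron

lemma nonneg_of_forall_mul_add_sq_nonneg {a c ε : ℝ} (hε : 0 < ε)
    (h : ∀ t, 0 < t → t ≤ ε → 0 ≤ t * c + t ^ 2 * a) : 0 ≤ c := by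
  have hlim : Tendsto (fun t : ℝ => c + t * a) (𝓝[>] 0) (𝓝 c) :=
    (Continuous.tendsto' (by fun_prop) 0 _ (by simp)).mono_left nhdsWithin_le_nhds
  refine ge_of_tendsto hlim ?_
  filter_upwards [Ioc_mem_nhdsGT hε] with t ⟨ht, htε⟩
  have := h t ht htε
  nlinarith

lemma le_sq_of_le_mul_sqrt {a c : ℝ} (ha : 0 ≤ a) (h : a ≤ c * √a) : a ≤ c ^ 2 := by
  nlinarith [Real.sq_sqrt ha, Real.sqrt_nonneg a, sq_nonneg (c - √a)]

lemma mul_abs_add_mul_nonneg {τ g : ℝ} (h : |g| ≤ τ) (y : ℝ) : 0 ≤ τ * |y| + g * y := by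
  nlinarith [neg_abs_le (g * y), abs_mul g y, mul_le_mul_of_nonneg_right h (abs_nonneg y)]

lemma mul_abs_add_mul_eq_max {τ : ℝ} (hτ : 0 ≤ τ) (g y : ℝ) :
    τ * |y| + g * y = max ((g + τ) * y) ((g - τ) * y) := by
  rw [abs_eq_max_neg, mul_max_of_nonneg _ _ hτ, max_add]
  ring_nf

namespace Matrix

variable {n : ℕ} {A : Matrix (Fin n) (Fin n) ℝ}

lemma PosSemidef.isSymm (hA : A.PosSemidef) : A.IsSymm :=
  isHermitian_iff_isSymm.1 hA.isHermitian

lemma IsSymm.dotProduct_mulVec_comm (hA : A.IsSymm) (u w : Fin n → ℝ) :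
    u ⬝ᵥ A *ᵥ w = w ⬝ᵥ A *ᵥ u := by
  rw [dotProduct_mulVec, ← mulVec_transpose, hA.eq, dotProduct_comm]

lemma PosSemidef.dotProduct_mulVec_self_nonneg (hA : A.PosSemidef) (u : Fin n → ℝ) :
    0 ≤ u ⬝ᵥ A *ᵥ u := by
  simpa using hA.dotProduct_mulVec_nonneg u

lemma sq_dotProduct_mulVec_le (hA : A.PosSemidef) (u w : Fin n → ℝ) :
    (u ⬝ᵥ A *ᵥ w) ^ 2 ≤ (u ⬝ᵥ A *ᵥ u) * (w ⬝ᵥ A *ᵥ w) := by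
  have hdiscr := discrim_le_zero (a := w ⬝ᵥ A *ᵥ w) (b := 2 * (u ⬝ᵥ A *ᵥ w))
    (c := u ⬝ᵥ A *ᵥ u) fun t => by
      have := hA.dotProduct_mulVec_self_nonneg (u + t • w)
      rw [mulVec_add, mulVec_smul] at this
      simp only [dotProduct_add, add_dotProduct, dotProduct_smul, smul_dotProduct,
        smul_eq_mul] at this
      rw [hA.isSymm.dotProduct_mulVec_comm w u] at this
      linarith
  rw [discrim] at hdiscr
  linarith

lemma sq_mulVec_apply_le (hA : A.PosSemidef) (d : Fin n → ℝ) (j : Fin n) :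
    (A *ᵥ d) j ^ 2 ≤ A j j * (d ⬝ᵥ A *ᵥ d) := by
  simpa [single_dotProduct] using sq_dotProduct_mulVec_le hA (Pi.single j 1) d

end Matrix

section L1Quad

variable {n : ℕ} {A : Matrix (Fin n) (Fin n) ℝ} {b : Fin n → ℝ} {τ : ℝ}

lemma quadObj_sub (hA : A.IsSymm) (x y : Fin n → ℝ) :
    quadObj A b y - quadObj A b x =
      (A *ᵥ x - b) ⬝ᵥ (y - x) + 1 / 2 * ((y - x) ⬝ᵥ A *ᵥ (y - x)) := by
  simp only [quadObj, mulVec_sub, dotProduct_sub, sub_dotProduct]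
  rw [hA.dotProduct_mulVec_comm x y, dotProduct_comm (A *ᵥ x) y, dotProduct_comm (A *ᵥ x) x,
    dotProduct_comm b y, dotProduct_comm b x]
  ring

lemma l1QuadObj_sub (hA : A.IsSymm) (x y : Fin n → ℝ) :
    l1QuadObj A b τ y - l1QuadObj A b τ x = (A *ᵥ x - b) ⬝ᵥ (y - x) +
      1 / 2 * ((y - x) ⬝ᵥ A *ᵥ (y - x)) + τ * ∑ i, (|y i| - |x i|) := by
  rw [l1QuadObj, l1QuadObj, Finset.sum_sub_distrib, ← quadObj_sub hA]
  ring

lemma l1QuadObj_add_single_sub (hA : A.IsSymm) (x : Fin n → ℝ) (i : Fin n) (t : ℝ) :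
    l1QuadObj A b τ (x + Pi.single i t) - l1QuadObj A b τ x =
      t * (A *ᵥ x - b) i + t ^ 2 * (A i i / 2) + τ * (|x i + t| - |x i|) := by
  rw [l1QuadObj_sub hA, add_sub_cancel_left, Fintype.sum_eq_single i fun j hj => by simp [hj]]
  simp only [dotProduct_single, Pi.sub_apply, one_div, mulVec_single, op_smul_eq_smul,
    dotProduct_smul, single_dotProduct, col_apply, smul_eq_mul, Pi.add_apply, Pi.single_eq_same,
    add_left_inj]
  ring

theorem abs_le_and_mul_abs_add_mul_eq_zero_of_isMin (hA : A.IsSymm) (hτ : 0 ≤ τ)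
    {xs : Fin n → ℝ} (hxs : ∀ y, l1QuadObj A b τ xs ≤ l1QuadObj A b τ y) (i : Fin n) :
    |(A *ᵥ xs - b) i| ≤ τ ∧ τ * |xs i| + (A *ᵥ xs - b) i * xs i = 0 := by
  set g := (A *ᵥ xs - b) i
  have hφ t : 0 ≤ t * g + t ^ 2 * (A i i / 2) + τ * (|xs i + t| - |xs i|) := by
    rw [← l1QuadObj_add_single_sub hA]
    exact sub_nonneg.2 (hxs _)
  have hright : 0 ≤ g + τ :=
    nonneg_of_forall_mul_add_sq_nonneg (a := A i i / 2) one_pos fun t ht _ => by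
      have := hφ t
      have := abs_add_le (xs i) t
      rw [abs_of_pos ht] at this
      nlinarith
  have hleft : 0 ≤ τ - g :=
    nonneg_of_forall_mul_add_sq_nonneg (a := A i i / 2) one_pos fun t ht _ => by
      have := hφ (-t)
      have := abs_add_le (xs i) (-t)
      rw [abs_neg, abs_of_pos ht] at this
      nlinarith
  have hg : |g| ≤ τ := abs_le.2 ⟨by linarith, by linarith⟩
  -- shrinking `xs i` towards `0` must not decrease `F`
  have htoward : 0 ≤ -(τ * |xs i| + g * xs i) :=
    nonneg_of_forall_mul_add_sq_nonneg (a := xs i ^ 2 * (A i i / 2)) one_pos fun s hs hs1 => by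
      have := hφ (-(s * xs i))
      rw [show xs i + -(s * xs i) = (1 - s) * xs i by ring, abs_mul,
        abs_of_nonneg (by linarith : 0 ≤ 1 - s)] at this
      nlinarith
  exact ⟨hg, le_antisymm (by linarith) (mul_abs_add_mul_nonneg hg _)⟩

lemma l1QuadObj_sub_eq_of_mul_abs_add_mul_eq_zero (hA : A.IsSymm) {xs : Fin n → ℝ}
    (hxs : ∀ i, τ * |xs i| + (A *ᵥ xs - b) i * xs i = 0) (y : Fin n → ℝ) :
    l1QuadObj A b τ y - l1QuadObj A b τ xs = 1 / 2 * ((y - xs) ⬝ᵥ A *ᵥ (y - xs)) +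
      ∑ i, (τ * |y i| + (A *ᵥ xs - b) i * y i) := by
  have hlin : (A *ᵥ xs - b) ⬝ᵥ (y - xs) + τ * ∑ i, (|y i| - |xs i|) -
      ∑ i, (τ * |y i| + (A *ᵥ xs - b) i * y i) =
      -∑ i, (τ * |xs i| + (A *ᵥ xs - b) i * xs i) := by
    simp only [dotProduct, Pi.sub_apply, Finset.mul_sum, ← Finset.sum_add_distrib,
      ← Finset.sum_sub_distrib, ← Finset.sum_neg_distrib]
    exact Finset.sum_congr rfl fun i _ => by ring
  rw [Finset.sum_eq_zero fun i _ => hxs i, neg_zero] at hlin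
  linarith [l1QuadObj_sub (b := b) (τ := τ) hA xs y]

lemma le_l1QuadObj_sub_of_isMin (hA : A.PosSemidef) (hτ : 0 ≤ τ) {xs : Fin n → ℝ}
    (hxs : ∀ y, l1QuadObj A b τ xs ≤ l1QuadObj A b τ y) (x : Fin n → ℝ) :
    1 / 2 * ((x - xs) ⬝ᵥ A *ᵥ (x - xs)) ≤ l1QuadObj A b τ x - l1QuadObj A b τ xs ∧
      ∀ i, τ * |x i| + (A *ᵥ xs - b) i * x i ≤ l1QuadObj A b τ x - l1QuadObj A b τ xs := by
  have hopt := abs_le_and_mul_abs_add_mul_eq_zero_of_isMin hA.isSymm hτ hxs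
  have hterm i : 0 ≤ τ * |x i| + (A *ᵥ xs - b) i * x i := mul_abs_add_mul_nonneg (hopt i).1 _
  have hquad := hA.dotProduct_mulVec_self_nonneg (x - xs)
  rw [l1QuadObj_sub_eq_of_mul_abs_add_mul_eq_zero hA.isSymm fun i => (hopt i).2]
  exact ⟨le_add_of_nonneg_right (Finset.sum_nonneg fun i _ => hterm i), fun i =>
    (Finset.single_le_sum (fun i _ => hterm i) (Finset.mem_univ i)).trans
      (le_add_of_nonneg_left (by positivity))⟩

lemma abs_mulVec_sub_apply_le_of_isMin (hA : A.PosSemidef) (hτ : 0 ≤ τ) {xs : Fin n → ℝ}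
    (hxs : ∀ y, l1QuadObj A b τ xs ≤ l1QuadObj A b τ y) (x : Fin n → ℝ) (j : Fin n) :
    |(A *ᵥ (x - xs)) j| ≤ √(2 * A.trace) * √(l1QuadObj A b τ x - l1QuadObj A b τ xs) := by
  rw [← Real.sqrt_mul (by linarith [hA.trace_nonneg])]
  refine Real.abs_le_sqrt ((sq_mulVec_apply_le hA _ j).trans ?_)
  have hjj : A j j ≤ A.trace :=
    Finset.single_le_sum (f := fun i => A i i) (fun i _ => hA.diag_nonneg) (Finset.mem_univ j)
  nlinarith [(le_l1QuadObj_sub_of_isMin hA hτ hxs x).1, hA.dotProduct_mulVec_self_nonneg (x - xs),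
    hA.diag_nonneg (i := j)]

lemma minSubgrad_apply_sub_mul_le (hτ : 0 ≤ τ) (x : Fin n → ℝ) (i : Fin n) (t : ℝ) :
    (minSubgrad A b τ x i - (A *ᵥ x - b) i) * (t - x i) ≤ τ * |t| - τ * |x i| := by
  set g := (A *ᵥ x - b) i
  simp only [minSubgrad]
  split_ifs with hx
  · rcases hx.lt_or_gt with hx | hx
    · rw [Real.sign_of_neg hx, abs_of_neg hx]
      nlinarith [neg_abs_le t]
    · rw [Real.sign_of_pos hx, abs_of_pos hx]
      nlinarith [le_abs_self t]
  · rw [not_not.1 hx, sub_zero, abs_zero, mul_zero, sub_zero]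
    have h : |min (g + τ) (max 0 (g - τ)) - g| ≤ τ := abs_le.2
      ⟨by linarith [le_min (by linarith : g - τ ≤ g + τ) (le_max_right 0 (g - τ))],
        by linarith [min_le_left (g + τ) (max 0 (g - τ))]⟩
    exact (le_abs_self _).trans ((abs_mul _ _).trans_le
      (mul_le_mul_of_nonneg_right h (abs_nonneg t)))

theorem l1QuadObj_add_minSubgrad_dotProduct_le (hA : A.PosSemidef) (hτ : 0 ≤ τ)
    (x y : Fin n → ℝ) :
    l1QuadObj A b τ x + minSubgrad A b τ x ⬝ᵥ (y - x) ≤ l1QuadObj A b τ y := by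
  have hsum : minSubgrad A b τ x ⬝ᵥ (y - x) - (A *ᵥ x - b) ⬝ᵥ (y - x) ≤
      τ * ∑ i, (|y i| - |x i|) := by
    rw [dotProduct, dotProduct, ← Finset.sum_sub_distrib, Finset.mul_sum]
    refine Finset.sum_le_sum fun i _ => ?_
    rw [← sub_mul, mul_sub]
    exact minSubgrad_apply_sub_mul_le hτ x i (y i)
  linarith [l1QuadObj_sub (b := b) (τ := τ) hA.isSymm x y,
    hA.dotProduct_mulVec_self_nonneg (y - x)]

/-- `argmin F` is the polyhedron `⟪argminNormal A g τ k, y⟫ ≤ argminBound (A *ᵥ x⋆) k`,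
where `g = A x⋆ - b`: the rows of `A` and `-A` encode `A y = A x⋆`, the other two families
encode `(gᵢ + τ) yᵢ ≤ 0` and `(gᵢ - τ) yᵢ ≤ 0`. -/
def argminNormal (A : Matrix (Fin n) (Fin n) ℝ) (g : Fin n → ℝ) (τ : ℝ) :
    (Fin n ⊕ Fin n) ⊕ (Fin n ⊕ Fin n) → EuclideanSpace ℝ (Fin n)
  | .inl (.inl j) => WithLp.toLp 2 (A j)
  | .inl (.inr j) => WithLp.toLp 2 (-A j)
  | .inr (.inl i) => WithLp.toLp 2 (Pi.single i (g i + τ))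
  | .inr (.inr i) => WithLp.toLp 2 (Pi.single i (g i - τ))

def argminBound (c : Fin n → ℝ) : (Fin n ⊕ Fin n) ⊕ (Fin n ⊕ Fin n) → ℝ
  | .inl (.inl j) => c j
  | .inl (.inr j) => -c j
  | .inr _ => 0

lemma forall_inner_argminNormal_sub_le_iff (hτ : 0 ≤ τ) (g xs y : Fin n → ℝ) (r : ℝ) :
    (∀ k, ⟪argminNormal A g τ k, WithLp.toLp 2 y⟫_ℝ - argminBound (A *ᵥ xs) k ≤ r) ↔
      (∀ j, |(A *ᵥ (y - xs)) j| ≤ r) ∧ ∀ i, τ * |y i| + g i * y i ≤ r := by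
  have hrow j : y ⬝ᵥ A j = (A *ᵥ y) j := dotProduct_comm _ _
  have hneg (a c : ℝ) : -a - -c ≤ r ↔ -r ≤ a - c := by constructor <;> intro <;> linarith
  simp only [Sum.forall, argminNormal, argminBound, EuclideanSpace.inner_toLp_toLp, star_trivial,
    mul_abs_add_mul_eq_max hτ, max_le_iff, abs_le, mulVec_sub, Pi.sub_apply, dotProduct_single,
    dotProduct_neg, hrow, hneg, sub_zero, mul_comm (y _), forall_and]
  tauto

lemma toLp_mem_polyhedron_argmin (hA : A.PosSemidef) (hτ : 0 ≤ τ) {xs : Fin n → ℝ}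
    (hxs : ∀ y, l1QuadObj A b τ xs ≤ l1QuadObj A b τ y) :
    WithLp.toLp 2 xs ∈ polyhedron (argminNormal A (A *ᵥ xs - b) τ) (argminBound (A *ᵥ xs)) :=
  fun k => sub_nonpos.1 <| (forall_inner_argminNormal_sub_le_iff hτ _ xs xs 0).2
    ⟨by simp, fun i => (abs_le_and_mul_abs_add_mul_eq_zero_of_isMin hA.isSymm hτ hxs i).2.le⟩ k

lemma inner_argminNormal_sub_le_of_isMin (hA : A.PosSemidef) (hτ : 0 ≤ τ) {xs : Fin n → ℝ}
    (hxs : ∀ y, l1QuadObj A b τ xs ≤ l1QuadObj A b τ y) {x : Fin n → ℝ} {δ : ℝ}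
    (hx : l1QuadObj A b τ x - l1QuadObj A b τ xs ≤ δ) (k : (Fin n ⊕ Fin n) ⊕ (Fin n ⊕ Fin n)) :
    ⟪argminNormal A (A *ᵥ xs - b) τ k, WithLp.toLp 2 x⟫_ℝ - argminBound (A *ᵥ xs) k ≤
      (√(2 * A.trace) + √δ) * √(l1QuadObj A b τ x - l1QuadObj A b τ xs) := by
  set gap := l1QuadObj A b τ x - l1QuadObj A b τ xs
  have hgap : gap ≤ √δ * √gap := by
    have := sub_nonneg.2 (hxs x)
    nlinarith [Real.mul_self_sqrt this, Real.sqrt_le_sqrt hx, Real.sqrt_nonneg gap]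
  refine (forall_inner_argminNormal_sub_le_iff hτ _ xs x _).2 ⟨fun j => ?_, fun i => ?_⟩ k
  · exact (abs_mulVec_sub_apply_le_of_isMin hA hτ hxs x j).trans <| by
      gcongr; exact le_add_of_nonneg_right (Real.sqrt_nonneg δ)
  · exact ((le_l1QuadObj_sub_of_isMin hA hτ hxs x).2 i).trans <| hgap.trans <| by
      gcongr; exact le_add_of_nonneg_left (Real.sqrt_nonneg _)

lemma l1QuadObj_ofLp_le_of_mem_polyhedron (hA : A.PosSemidef) (hτ : 0 ≤ τ) {xs : Fin n → ℝ}
    (hxs : ∀ y, l1QuadObj A b τ xs ≤ l1QuadObj A b τ y) {y : EuclideanSpace ℝ (Fin n)}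
    (hy : y ∈ polyhedron (argminNormal A (A *ᵥ xs - b) τ) (argminBound (A *ᵥ xs))) :
    l1QuadObj A b τ y.ofLp ≤ l1QuadObj A b τ xs := by
  obtain ⟨hAy, hslack⟩ := (forall_inner_argminNormal_sub_le_iff hτ _ xs y.ofLp 0).1
    fun k => sub_nonpos.2 (hy k)
  have hker : A *ᵥ (y.ofLp - xs) = 0 := funext fun j => abs_nonpos_iff.1 (hAy j)
  have hgap := l1QuadObj_sub_eq_of_mul_abs_add_mul_eq_zero hA.isSymm
    (fun i => (abs_le_and_mul_abs_add_mul_eq_zero_of_isMin hA.isSymm hτ hxs i).2) y.ofLp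
  rw [hker, dotProduct_zero, mul_zero, zero_add] at hgap
  linarith [Finset.sum_nonpos fun i (_ : i ∈ Finset.univ) => hslack i]

end L1Quad

/-- for any `δ ≥ 0` there is `η > 0` with
`F(x) − F* ≤ η ‖v(x)‖²` whenever `F(x) − F* ≤ δ`. -/
theorem stmt1 {n : ℕ} (A : Matrix (Fin n) (Fin n) ℝ) (b : Fin n → ℝ) (τ : ℝ)
    (hA : A.PosSemidef) (hτ : 0 ≤ τ)
    (Fstar : ℝ) (xstar : Fin n → ℝ)
    (hxstar : l1QuadObj A b τ xstar = Fstar)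
    (hmin : ∀ y, Fstar ≤ l1QuadObj A b τ y) :
    ∀ δ : ℝ, 0 ≤ δ → ∃ η > 0, ∀ x : Fin n → ℝ,
      l1QuadObj A b τ x - Fstar ≤ δ →
      l1QuadObj A b τ x - Fstar ≤
        η * (minSubgrad A b τ x ⬝ᵥ minSubgrad A b τ x) := by
  intro δ _
  subst hxstar
  obtain ⟨K, hK⟩ := exists_norm_sub_le_mul_of_inner_sub_le _ _
    ⟨_, toLp_mem_polyhedron_argmin hA hτ hmin⟩
  set C := √(2 * A.trace) + √δ
  refine ⟨K ^ 2 * C ^ 2 + 1, by positivity, fun x hx => ?_⟩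
  set gap := l1QuadObj A b τ x - l1QuadObj A b τ xstar
  set v := minSubgrad A b τ x
  obtain ⟨y, hy, hxy⟩ := hK (WithLp.toLp 2 x) (C * √gap) (by positivity)
    (inner_argminNormal_sub_le_of_isMin hA hτ hmin hx)
  have hv : ‖WithLp.toLp 2 v‖ ^ 2 = v ⬝ᵥ v := by
    rw [← real_inner_self_eq_norm_sq, EuclideanSpace.inner_toLp_toLp, star_trivial]
  have hgap : gap ≤ ‖WithLp.toLp 2 v‖ * K * C * √gap :=
    calc gap ≤ v ⬝ᵥ (x - y.ofLp) := by
          linarith [l1QuadObj_add_minSubgrad_dotProduct_le (b := b) hA hτ x y.ofLp,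
            l1QuadObj_ofLp_le_of_mem_polyhedron hA hτ hmin hy, dotProduct_sub v x y.ofLp,
            dotProduct_sub v y.ofLp x]
      _ = ⟪WithLp.toLp 2 v, WithLp.toLp 2 x - y⟫_ℝ := by
          rw [EuclideanSpace.inner_eq_star_dotProduct, WithLp.ofLp_sub, star_trivial,
            dotProduct_comm]
      _ ≤ ‖WithLp.toLp 2 v‖ * (K * (C * √gap)) := (real_inner_le_norm _ _).trans (by gcongr)
      _ = ‖WithLp.toLp 2 v‖ * K * C * √gap := by ring
  calc gap ≤ (‖WithLp.toLp 2 v‖ * K * C) ^ 2 := le_sq_of_le_mul_sqrt (sub_nonneg.2 (hmin x)) hgap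
    _ = K ^ 2 * C ^ 2 * (v ⬝ᵥ v) := by rw [← hv]; ring
    _ ≤ (K ^ 2 * C ^ 2 + 1) * (v ⬝ᵥ v) := by nlinarith [hv ▸ sq_nonneg ‖WithLp.toLp 2 v‖]
end

section
/- In the setting of the ℓ₁-regularized QP F(x) = (1/2)xᵀAx − bᵀx + τ‖x‖₁, suppose x satisfies F(x) ≤ F(x⁰) and the error bound F(y) − F*_y ≤ (η/(2‖A‖))‖[v(y)]_{supp(y)}‖² holds for all y with F(y) ≤ F(x⁰), where F*_y = min{F(z) : zᵢ = 0 whenever yᵢ = 0}. If ‖[v(x)]_{I₀(x)}‖ > √η ‖[v(x)]_{supp(x)}‖, then the exact-line-search point x⁺ = x − α* v_p(x) with α* = ‖v_p(x)‖²/((v_p(x))ᵀA v_p(x)) satisfies F(x⁺) < F*_x. -/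
/-!
Write `v = v_p(x)`. On `I₀(x)` the coordinate `vᵢ` is the soft threshold
`min (gᵢ + τ) (max 0 (gᵢ - τ))` of the gradient `g = Ax - b`, and `gᵢ vᵢ = vᵢ² + τ|vᵢ|`; since `v`
vanishes on `supp x`, the ℓ₁ term grows linearly along the ray and
`F(x - t v) = F(x) - t‖v‖² + (t²/2) vᵀAv` exactly for `t ≥ 0`. Boundedness of `F` forces
`vᵀAv > 0` when `v ≠ 0`, so exact line search decreases `F` by `‖v‖⁴/(2 vᵀAv) ≥ ‖v‖²/(2‖A‖)`, and
`‖v‖² > η ‖[v(x)]_{supp x}‖² ≥ 2‖A‖ (F(x) - F*_x)` by the error bound at `x`.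
-/

open Matrix Finset

/-- The projected minimum-norm subgradient `v_p(x)`: `v(x)` on `I₀(x)`, zero elsewhere. -/
noncomputable def projMinSubgrad {n : ℕ} (A : Matrix (Fin n) (Fin n) ℝ) (b : Fin n → ℝ)
    (τ : ℝ) (x : Fin n → ℝ) : Fin n → ℝ := fun i =>
  if x i = 0 then minSubgrad A b τ x i else 0

/-- `F*_x = min{F(y) : yᵢ = 0 whenever xᵢ = 0}`. -/
noncomputable def faceOpt {n : ℕ} (A : Matrix (Fin n) (Fin n) ℝ) (b : Fin n → ℝ)
    (τ : ℝ) (x : Fin n → ℝ) : ℝ :=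
  sInf (l1QuadObj A b τ '' {y | ∀ i, x i = 0 → y i = 0})

theorem mul_min_max_eq_sq_add_abs {g τ : ℝ} (hτ : 0 ≤ τ) :
    g * min (g + τ) (max 0 (g - τ)) =
      min (g + τ) (max 0 (g - τ)) ^ 2 + τ * |min (g + τ) (max 0 (g - τ))| := by
  rcases le_total 0 (g - τ) with hpos | hpos
  · rw [max_eq_right hpos, min_eq_right (by linarith), abs_of_nonneg hpos]; ring
  · rw [max_eq_left hpos]
    rcases le_total 0 (g + τ) with hneg | hneg
    · simp [min_eq_right hneg]
    · rw [min_eq_left hneg, abs_of_nonpos hneg]; ring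

theorem mul_lt_of_sqrt_mul_sqrt_lt {a b c : ℝ} (hb : 0 ≤ b) (h : √a * √b < √c) : a * b < c := by
  rw [← Real.sqrt_mul' a hb] at h
  exact (Real.sqrt_lt_sqrt_iff_of_pos (Real.sqrt_pos.mp ((Real.sqrt_nonneg _).trans_lt h))).mp h

section
variable {ι : Type*} [Fintype ι]

theorem Matrix.dotProduct_mulVec_comm_of_isSymm {R : Type*} [CommSemiring R] {A : Matrix ι ι R}
    (hA : A.IsSymm) (x y : ι → R) : x ⬝ᵥ A *ᵥ y = y ⬝ᵥ A *ᵥ x := by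
  rw [dotProduct_mulVec, ← mulVec_transpose, hA.eq, dotProduct_comm]

variable [DecidableEq ι]

open scoped RealInnerProductSpace in
theorem Matrix.dotProduct_mulVec_le_norm_toEuclideanCLM_mul (A : Matrix ι ι ℝ) (v : ι → ℝ) :
    v ⬝ᵥ A *ᵥ v ≤ ‖toEuclideanCLM (𝕜 := ℝ) A‖ * (v ⬝ᵥ v) := by
  set w : EuclideanSpace ℝ ι := WithLp.toLp 2 v
  have hw : v ⬝ᵥ v = ‖w‖ ^ 2 := by
    rw [← real_inner_self_eq_norm_sq, EuclideanSpace.inner_toLp_toLp, star_trivial]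
  calc v ⬝ᵥ A *ᵥ v = ⟪w, toEuclideanCLM (𝕜 := ℝ) A w⟫ := (inner_toEuclideanCLM A w w).symm
    _ ≤ ‖w‖ * ‖toEuclideanCLM (𝕜 := ℝ) A w‖ := real_inner_le_norm _ _
    _ ≤ ‖w‖ * (‖toEuclideanCLM (𝕜 := ℝ) A‖ * ‖w‖) := by
        gcongr
        exact ContinuousLinearMap.le_opNorm _ _
    _ = ‖toEuclideanCLM (𝕜 := ℝ) A‖ * (v ⬝ᵥ v) := by rw [hw]; ring

theorem Matrix.norm_toEuclideanCLM_pos_of_dotProduct_mulVec_pos {A : Matrix ι ι ℝ} {v : ι → ℝ}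
    (hv : 0 < v ⬝ᵥ A *ᵥ v) : 0 < ‖toEuclideanCLM (𝕜 := ℝ) A‖ := by
  refine (norm_nonneg _).lt_of_ne fun hA => ?_
  have := dotProduct_mulVec_le_norm_toEuclideanCLM_mul A v
  rw [← hA, zero_mul] at this
  linarith

end

noncomputable def exactLineSearchStep {n : ℕ} (A : Matrix (Fin n) (Fin n) ℝ) (b : Fin n → ℝ)
    (τ : ℝ) (x : Fin n → ℝ) : Fin n → ℝ :=
  x - ((projMinSubgrad A b τ x ⬝ᵥ projMinSubgrad A b τ x) /
    (projMinSubgrad A b τ x ⬝ᵥ A *ᵥ projMinSubgrad A b τ x)) • projMinSubgrad A b τ x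

section
variable {n : ℕ} (A : Matrix (Fin n) (Fin n) ℝ) (b : Fin n → ℝ) (τ : ℝ) (x : Fin n → ℝ)

theorem projMinSubgrad_dotProduct_self :
    projMinSubgrad A b τ x ⬝ᵥ projMinSubgrad A b τ x =
      ∑ i ∈ univ.filter (fun i => x i = 0), minSubgrad A b τ x i ^ 2 := by
  rw [sum_filter, dotProduct]
  refine sum_congr rfl fun i _ => ?_
  by_cases hi : x i = 0 <;> simp [projMinSubgrad, hi, sq]

theorem projMinSubgrad_dotProduct_sub (hτ : 0 ≤ τ) :
    projMinSubgrad A b τ x ⬝ᵥ (A *ᵥ x - b) =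
      projMinSubgrad A b τ x ⬝ᵥ projMinSubgrad A b τ x + τ * ∑ i, |projMinSubgrad A b τ x i| := by
  simp only [dotProduct, mul_sum]
  rw [← sum_add_distrib]
  refine sum_congr rfl fun i _ => ?_
  by_cases hi : x i = 0
  · simp only [projMinSubgrad, minSubgrad, hi, if_true, ne_eq, not_true_eq_false, if_false]
    rw [mul_comm, mul_min_max_eq_sq_add_abs hτ, sq]
  · simp [projMinSubgrad, hi]

theorem l1QuadObj_sub_smul_projMinSubgrad (hA : A.IsSymm) (hτ : 0 ≤ τ) {t : ℝ} (ht : 0 ≤ t) :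
    l1QuadObj A b τ (x - t • projMinSubgrad A b τ x) =
      l1QuadObj A b τ x - t * (projMinSubgrad A b τ x ⬝ᵥ projMinSubgrad A b τ x)
        + t ^ 2 / 2 * (projMinSubgrad A b τ x ⬝ᵥ A *ᵥ projMinSubgrad A b τ x) := by
  set v := projMinSubgrad A b τ x
  have hquad : quadObj A b (x - t • v) =
      quadObj A b x - t * (v ⬝ᵥ (A *ᵥ x - b)) + t ^ 2 / 2 * (v ⬝ᵥ A *ᵥ v) := by
    simp only [quadObj, mulVec_sub, mulVec_smul, dotProduct_sub, sub_dotProduct,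
      dotProduct_smul, smul_dotProduct, smul_eq_mul]
    rw [dotProduct_mulVec_comm_of_isSymm hA x v, dotProduct_comm b v]
    ring
  have habs : ∑ i, |(x - t • v) i| = ∑ i, |x i| + t * ∑ i, |v i| := by
    rw [mul_sum, ← sum_add_distrib]
    refine sum_congr rfl fun i _ => ?_
    by_cases hi : x i = 0
    · simp [hi, abs_mul, abs_of_nonneg ht]
    · simp [v, projMinSubgrad, hi]
  rw [l1QuadObj, l1QuadObj, hquad, habs, projMinSubgrad_dotProduct_sub A b τ x hτ]
  ring

theorem projMinSubgrad_dotProduct_mulVec_pos (hA : A.PosSemidef) (hτ : 0 ≤ τ)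
    (hbdd : ∃ xs, ∀ y, l1QuadObj A b τ xs ≤ l1QuadObj A b τ y)
    (hv : 0 < projMinSubgrad A b τ x ⬝ᵥ projMinSubgrad A b τ x) :
    0 < projMinSubgrad A b τ x ⬝ᵥ A *ᵥ projMinSubgrad A b τ x := by
  set v := projMinSubgrad A b τ x
  have hq_nonneg : 0 ≤ v ⬝ᵥ A *ᵥ v := by simpa using hA.dotProduct_mulVec_nonneg v
  refine hq_nonneg.lt_of_ne' fun hq => ?_
  obtain ⟨xs, hxs⟩ := hbdd
  set t := (l1QuadObj A b τ x - l1QuadObj A b τ xs + 1) / (v ⬝ᵥ v)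
  have ht : 0 ≤ t := div_nonneg (by linarith [hxs x]) hv.le
  have hray := l1QuadObj_sub_smul_projMinSubgrad A b τ x (isHermitian_iff_isSymm.mp hA.1) hτ ht
  have hmin := hxs (x - t • v)
  rw [hray, hq, mul_zero, add_zero, div_mul_cancel₀ _ hv.ne'] at hmin
  linarith

theorem l1QuadObj_exactLineSearchStep_le (hA : A.PosSemidef) (hτ : 0 ≤ τ)
    (hq : 0 < projMinSubgrad A b τ x ⬝ᵥ A *ᵥ projMinSubgrad A b τ x) :
    l1QuadObj A b τ (exactLineSearchStep A b τ x) ≤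
      l1QuadObj A b τ x - projMinSubgrad A b τ x ⬝ᵥ projMinSubgrad A b τ x /
        (2 * ‖toEuclideanCLM (𝕜 := ℝ) A‖) := by
  set v := projMinSubgrad A b τ x
  set q := v ⬝ᵥ A *ᵥ v
  set N := ‖toEuclideanCLM (𝕜 := ℝ) A‖
  have hP : 0 ≤ v ⬝ᵥ v := by simpa using dotProduct_self_star_nonneg v
  have hqN : q ≤ N * (v ⬝ᵥ v) := dotProduct_mulVec_le_norm_toEuclideanCLM_mul A v
  have hN : 0 < N := norm_toEuclideanCLM_pos_of_dotProduct_mulVec_pos hq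
  have hdecrease : (v ⬝ᵥ v) / q * (v ⬝ᵥ v) - ((v ⬝ᵥ v) / q) ^ 2 / 2 * q =
      (v ⬝ᵥ v) ^ 2 / (2 * q) := by
    field_simp
    ring
  have hbound : (v ⬝ᵥ v) / (2 * N) ≤ (v ⬝ᵥ v) ^ 2 / (2 * q) := by
    rw [div_le_div_iff₀ (by positivity) (by positivity)]
    nlinarith
  rw [exactLineSearchStep, l1QuadObj_sub_smul_projMinSubgrad A b τ x
    (isHermitian_iff_isSymm.mp hA.1) hτ (div_nonneg hP hq.le)]
  linarith

end

theorem stmt5_general {n : ℕ} (A : Matrix (Fin n) (Fin n) ℝ) (b : Fin n → ℝ) (τ : ℝ)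
    (hA : A.PosSemidef) (hτ : 0 ≤ τ)
    (hbdd : ∃ xs, ∀ y, l1QuadObj A b τ xs ≤ l1QuadObj A b τ y)
    (x0 : Fin n → ℝ) (η : ℝ)
    (herr : ∀ y : Fin n → ℝ, l1QuadObj A b τ y ≤ l1QuadObj A b τ x0 →
      l1QuadObj A b τ y - faceOpt A b τ y ≤
        η / (2 * ‖Matrix.toEuclideanCLM (𝕜 := ℝ) A‖) *
          ∑ i ∈ univ.filter (fun i => y i ≠ 0), (minSubgrad A b τ y i) ^ 2)
    (x : Fin n → ℝ)
    (hx : l1QuadObj A b τ x ≤ l1QuadObj A b τ x0)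
    (hbig : Real.sqrt (∑ i ∈ univ.filter (fun i => x i = 0), (minSubgrad A b τ x i) ^ 2) >
      Real.sqrt η *
        Real.sqrt (∑ i ∈ univ.filter (fun i => x i ≠ 0), (minSubgrad A b τ x i) ^ 2)) :
    l1QuadObj A b τ
        (x - ((projMinSubgrad A b τ x ⬝ᵥ projMinSubgrad A b τ x) /
            (projMinSubgrad A b τ x ⬝ᵥ A.mulVec (projMinSubgrad A b τ x))) •
            projMinSubgrad A b τ x) <
      faceOpt A b τ x := by
  set S := ∑ i ∈ univ.filter (fun i => x i ≠ 0), (minSubgrad A b τ x i) ^ 2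
  set N := ‖toEuclideanCLM (𝕜 := ℝ) A‖
  have hP : 0 < projMinSubgrad A b τ x ⬝ᵥ projMinSubgrad A b τ x := by
    rw [projMinSubgrad_dotProduct_self, ← Real.sqrt_pos]
    exact (mul_nonneg (Real.sqrt_nonneg _) (Real.sqrt_nonneg _)).trans_lt hbig
  have hSP : η * S < projMinSubgrad A b τ x ⬝ᵥ projMinSubgrad A b τ x := by
    rw [projMinSubgrad_dotProduct_self]
    exact mul_lt_of_sqrt_mul_sqrt_lt (sum_nonneg fun i _ => sq_nonneg _) hbig
  have hq := projMinSubgrad_dotProduct_mulVec_pos A b τ x hA hτ hbdd hP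
  have hN : 0 < N := norm_toEuclideanCLM_pos_of_dotProduct_mulVec_pos hq
  calc l1QuadObj A b τ (exactLineSearchStep A b τ x)
      ≤ l1QuadObj A b τ x - projMinSubgrad A b τ x ⬝ᵥ projMinSubgrad A b τ x / (2 * N) :=
        l1QuadObj_exactLineSearchStep_le A b τ x hA hτ hq
    _ < l1QuadObj A b τ x - η / (2 * N) * S := by
        rw [div_mul_eq_mul_div]
        gcongr
    _ ≤ faceOpt A b τ x := by linarith [herr x hx]

/-- if the error bound
`F(y) − F*_y ≤ (η/(2‖A‖)) ‖[v(y)]_{supp y}‖²` holds on the sublevel set `{F ≤ F(x⁰)}`,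
`F(x) ≤ F(x⁰)` and `‖[v(x)]_{I₀(x)}‖ > √η ‖[v(x)]_{supp x}‖`, then the exact-line-search
point `x⁺ = x − α* v_p(x)` satisfies `F(x⁺) < F*_x`. -/
theorem stmt5 {n : ℕ} (A : Matrix (Fin n) (Fin n) ℝ) (b : Fin n → ℝ) (τ : ℝ)
    (hA : A.PosSemidef) (hτ : 0 ≤ τ)
    (hbdd : ∃ xs, ∀ y, l1QuadObj A b τ xs ≤ l1QuadObj A b τ y)
    (x0 : Fin n → ℝ) (η : ℝ) (hη : 0 < η)
    (herr : ∀ y : Fin n → ℝ, l1QuadObj A b τ y ≤ l1QuadObj A b τ x0 →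
      l1QuadObj A b τ y - faceOpt A b τ y ≤
        η / (2 * ‖Matrix.toEuclideanCLM (𝕜 := ℝ) A‖) *
          ∑ i ∈ univ.filter (fun i => y i ≠ 0), (minSubgrad A b τ y i) ^ 2)
    (x : Fin n → ℝ)
    (hx : l1QuadObj A b τ x ≤ l1QuadObj A b τ x0)
    (hbig : Real.sqrt (∑ i ∈ univ.filter (fun i => x i = 0), (minSubgrad A b τ x i) ^ 2) >
      Real.sqrt η *
        Real.sqrt (∑ i ∈ univ.filter (fun i => x i ≠ 0), (minSubgrad A b τ x i) ^ 2)) :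
    l1QuadObj A b τ
        (x - ((projMinSubgrad A b τ x ⬝ᵥ projMinSubgrad A b τ x) /
            (projMinSubgrad A b τ x ⬝ᵥ A.mulVec (projMinSubgrad A b τ x))) •
            projMinSubgrad A b τ x) <
      faceOpt A b τ x :=
  stmt5_general A b τ hA hτ hbdd x0 η herr x hx hbig
end

section
/- Consider the conjugate gradient method applied to f(x) = (1/2)xᵀAx − bᵀx with A symmetric positive semidefinite, started at x⁰ with r⁰ = Ax⁰ − b, p⁰ = −r⁰, terminating when Ap^k = 0. If b ∈ range(A), then the method terminates at some iteration k with 0 ≤ k ≤ rank(A), and the terminating iterate x^k satisfies ∇f(x^k) = 0, i.e., x^k is an optimal solution. -/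
/-!
Every residual `r^k = A x^k - b` lies in `range A`. As long as no residual vanishes, the usual
CG relations hold: the directions are `A`-conjugate and orthogonal to all later residuals, hence the
residuals are pairwise orthogonal. Positive semidefiniteness together with `p^k ∈ range A` keeps the
denominators `(p^k)ᵀ A p^k` nonzero, since `A` is injective on its range. Nonzero pairwise orthogonal
vectors in `range A` number at most `rank A`, so some `r^k` with `k ≤ rank A` vanishes; then
`p^k = 0`, and `A x^k = b` makes `x^k` a minimiser of the convex quadratic `f`.
-/

open Matrix

theorem Matrix.PosSemidef.isSymm_s7 {ι : Type*} {A : Matrix ι ι ℝ} (hA : A.PosSemidef) : A.IsSymm :=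
  isHermitian_iff_isSymm.mp hA.1

section LinearAlgebra

variable {ι : Type*} [Fintype ι]

theorem Matrix.IsSymm.dotProduct_mulVec_comm_s7 {A : Matrix ι ι ℝ} (hA : A.IsSymm) (u v : ι → ℝ) :
    u ⬝ᵥ A *ᵥ v = v ⬝ᵥ A *ᵥ u := by
  rw [dotProduct_mulVec, dotProduct_comm, ← mulVec_transpose, hA.eq]

theorem Matrix.IsSymm.eq_zero_of_mem_range_of_mulVec_eq_zero {A : Matrix ι ι ℝ} (hA : A.IsSymm)
    {v : ι → ℝ} (hv : v ∈ LinearMap.range A.mulVecLin) (h : A *ᵥ v = 0) : v = 0 := by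
  obtain ⟨w, rfl⟩ := hv
  rw [mulVecLin_apply] at h ⊢
  rw [← dotProduct_self_eq_zero, hA.dotProduct_mulVec_comm_s7, h, dotProduct_zero]

theorem Matrix.PosSemidef.eq_zero_of_mem_range_of_dotProduct_mulVec_self_eq_zero
    {A : Matrix ι ι ℝ} (hA : A.PosSemidef) {v : ι → ℝ} (hv : v ∈ LinearMap.range A.mulVecLin)
    (h : v ⬝ᵥ A *ᵥ v = 0) : v = 0 :=
  hA.isSymm_s7.eq_zero_of_mem_range_of_mulVec_eq_zero hv
    ((hA.dotProduct_mulVec_zero_iff v).mp (by rwa [star_trivial]))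

theorem linearIndependent_of_ne_zero_of_dotProduct_eq_zero {κ : Type*} {v : κ → ι → ℝ}
    (hz : ∀ i, v i ≠ 0) (ho : Pairwise fun i j => v i ⬝ᵥ v j = 0) : LinearIndependent ℝ v := by
  have hE : LinearIndependent ℝ fun i => (WithLp.toLp 2 (v i) : EuclideanSpace ℝ ι) :=
    linearIndependent_of_ne_zero_of_inner_eq_zero (fun i => by simpa using hz i) fun i j hij => by
      dsimp only
      rw [EuclideanSpace.inner_toLp_toLp, star_trivial, dotProduct_comm, ho hij]
  exact hE.of_comp (WithLp.linearEquiv 2 ℝ (ι → ℝ)).symm.toLinearMap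

theorem Matrix.card_le_rank_of_linearIndependent {m K κ : Type*} [Fintype m] [Field K]
    [Fintype κ] (A : Matrix m ι K) {v : κ → m → K} (hv : LinearIndependent K v)
    (hmem : ∀ i, v i ∈ LinearMap.range A.mulVecLin) : Fintype.card κ ≤ A.rank := by
  rw [← finrank_span_eq_card hv]
  exact Submodule.finrank_mono (Submodule.span_le.mpr (Set.range_subset_iff.mpr hmem))

end LinearAlgebra

theorem Matrix.PosSemidef.quadObj_le_of_mulVec_eq {n : ℕ} {A : Matrix (Fin n) (Fin n) ℝ}
    (hA : A.PosSemidef) {b x : Fin n → ℝ} (hx : A *ᵥ x = b) (y : Fin n → ℝ) :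
    quadObj A b x ≤ quadObj A b y := by
  have hsymm := hA.isSymm_s7.dotProduct_mulVec_comm_s7
  have hgap : quadObj A b y - quadObj A b x = 1 / 2 * ((y - x) ⬝ᵥ A *ᵥ (y - x)) := by
    simp only [quadObj, mulVec_sub, dotProduct_sub, sub_dotProduct]
    rw [← hx, dotProduct_comm (A *ᵥ x) y, dotProduct_comm (A *ᵥ x) x, hsymm y x]
    ring
  have hnonneg := hA.dotProduct_mulVec_nonneg (y - x)
  rw [star_trivial] at hnonneg
  linarith

section ConjugateGradient

variable {ι : Type*} [Fintype ι]

/-- Lean's `x / 0 = 0` makes the recursion total: the run is not stopped when `A p^k = 0`. -/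
structure IsCGRun (A : Matrix ι ι ℝ) (b : ι → ℝ) (x r p : ℕ → ι → ℝ) : Prop where
  res_zero : r 0 = A *ᵥ x 0 - b
  dir_zero : p 0 = -r 0
  iter_succ : ∀ k, x (k + 1) = x k + (r k ⬝ᵥ r k / (p k ⬝ᵥ A *ᵥ p k)) • p k
  res_succ : ∀ k, r (k + 1) = r k + (r k ⬝ᵥ r k / (p k ⬝ᵥ A *ᵥ p k)) • A *ᵥ p k
  dir_succ : ∀ k, p (k + 1) = -r (k + 1) + (r (k + 1) ⬝ᵥ r (k + 1) / (r k ⬝ᵥ r k)) • p k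

def CGOrthogonalUpTo (A : Matrix ι ι ℝ) (r p : ℕ → ι → ℝ) (k : ℕ) : Prop :=
  ∀ i j, i < j → j ≤ k → p i ⬝ᵥ A *ᵥ p j = 0 ∧ p i ⬝ᵥ r j = 0

namespace IsCGRun

variable {A : Matrix ι ι ℝ} {b : ι → ℝ} {x r p : ℕ → ι → ℝ}

theorem res_eq (h : IsCGRun A b x r p) (k : ℕ) : r k = A *ᵥ x k - b := by
  induction k with
  | zero => exact h.res_zero
  | succ k ih =>
    rw [h.res_succ, h.iter_succ, ih, mulVec_add, mulVec_smul]
    abel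

theorem res_mem_range (h : IsCGRun A b x r p) (hb : b ∈ LinearMap.range A.mulVecLin) (k : ℕ) :
    r k ∈ LinearMap.range A.mulVecLin := by
  rw [h.res_eq]
  exact sub_mem (LinearMap.mem_range_self _ _) hb

theorem dir_mem_range (h : IsCGRun A b x r p) (hb : b ∈ LinearMap.range A.mulVecLin) (k : ℕ) :
    p k ∈ LinearMap.range A.mulVecLin := by
  induction k with
  | zero =>
    rw [h.dir_zero]
    exact neg_mem (h.res_mem_range hb 0)
  | succ k ih =>
    rw [h.dir_succ]
    exact add_mem (neg_mem (h.res_mem_range hb _)) (Submodule.smul_mem _ _ ih)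

theorem dir_eq_zero_of_res_eq_zero (h : IsCGRun A b x r p) {k : ℕ} (hk : r k = 0) : p k = 0 := by
  cases k with
  | zero => rw [h.dir_zero, hk, neg_zero]
  | succ k => rw [h.dir_succ, hk, dotProduct_zero, zero_div, zero_smul, neg_zero, add_zero]

theorem dir_dot_res_self (h : IsCGRun A b x r p) {k : ℕ} (hk : ∀ i < k, p i ⬝ᵥ r k = 0) :
    p k ⬝ᵥ r k = -(r k ⬝ᵥ r k) := by
  cases k with
  | zero => rw [h.dir_zero, neg_dotProduct]
  | succ k =>
    rw [h.dir_succ, add_dotProduct, neg_dotProduct, smul_dotProduct, hk k k.lt_succ_self,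
      smul_zero, add_zero]

/-- `r^i` lies in the span of `p^0, …, p^i`. -/
theorem res_dot_eq_zero (h : IsCGRun A b x r p) {i : ℕ} {u : ι → ℝ}
    (hu : ∀ j ≤ i, p j ⬝ᵥ u = 0) : r i ⬝ᵥ u = 0 := by
  cases i with
  | zero => rw [← neg_neg (r 0), ← h.dir_zero, neg_dotProduct, hu 0 le_rfl, neg_zero]
  | succ i =>
    have hr : r (i + 1) = -p (i + 1) + (r (i + 1) ⬝ᵥ r (i + 1) / (r i ⬝ᵥ r i)) • p i := by
      rw [h.dir_succ]
      abel
    rw [hr, add_dotProduct, neg_dotProduct, smul_dotProduct, hu _ le_rfl, hu i i.le_succ,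
      smul_zero, neg_zero, add_zero]

theorem step_mul_dot_mulVec_dir (h : IsCGRun A b x r p) (j : ℕ) (u : ι → ℝ) :
    r j ⬝ᵥ r j / (p j ⬝ᵥ A *ᵥ p j) * (u ⬝ᵥ A *ᵥ p j) = u ⬝ᵥ r (j + 1) - u ⬝ᵥ r j := by
  rw [h.res_succ, dotProduct_add, dotProduct_smul, smul_eq_mul]
  ring

theorem dir_dot_res_succ_eq_zero (h : IsCGRun A b x r p) {m : ℕ} (hm : CGOrthogonalUpTo A r p m)
    (hpAp : p m ⬝ᵥ A *ᵥ p m ≠ 0) {j : ℕ} (hj : j ≤ m) : p j ⬝ᵥ r (m + 1) = 0 := by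
  rw [h.res_succ, dotProduct_add, dotProduct_smul, smul_eq_mul]
  rcases hj.eq_or_lt with rfl | hjm
  · rw [h.dir_dot_res_self fun i hi => (hm i j hi le_rfl).2, div_mul_cancel₀ _ hpAp]
    ring
  · rw [(hm j m hjm le_rfl).2, (hm j m hjm le_rfl).1, mul_zero, add_zero]

theorem dir_dot_mulVec_dir_succ_eq_zero (h : IsCGRun A b x r p) (hA : A.IsSymm) {m : ℕ}
    (hm : CGOrthogonalUpTo A r p m) (hres : ∀ j ≤ m, r j ≠ 0)
    (hpAp : ∀ j ≤ m, p j ⬝ᵥ A *ᵥ p j ≠ 0) (horth : ∀ j ≤ m, p j ⬝ᵥ r (m + 1) = 0) {j : ℕ}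
    (hj : j ≤ m) : p j ⬝ᵥ A *ᵥ p (m + 1) = 0 := by
  have hrr : ∀ i ≤ m, r (m + 1) ⬝ᵥ r i = 0 := fun i hi => by
    rw [dotProduct_comm]
    exact h.res_dot_eq_zero fun l hl => horth l (hl.trans hi)
  have hstep := h.step_mul_dot_mulVec_dir j (r (m + 1))
  have hrj : r j ⬝ᵥ r j ≠ 0 := fun h0 => hres j hj (dotProduct_self_eq_zero.mp h0)
  rw [hA.dotProduct_mulVec_comm_s7, h.dir_succ, add_dotProduct, neg_dotProduct, smul_dotProduct,
    smul_eq_mul]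
  rcases hj.eq_or_lt with rfl | hjm
  · -- `hstep` says `α_j (r^{j+1})ᵀ A p^j = ‖r^{j+1}‖²`, which `β_{j+1} (p^j)ᵀ A p^j` cancels
    rw [hrr j le_rfl, sub_zero] at hstep
    field_simp [hpAp j le_rfl] at hstep ⊢
    linarith
  · rw [hrr j hjm.le, hrr (j + 1) hjm, sub_zero] at hstep
    have hα : r j ⬝ᵥ r j / (p j ⬝ᵥ A *ᵥ p j) ≠ 0 := div_ne_zero hrj (hpAp j hj)
    rw [(mul_eq_zero.mp hstep).resolve_left hα, hA.dotProduct_mulVec_comm_s7, (hm j m hjm le_rfl).1]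
    ring

theorem dir_dot_mulVec_dir_ne_zero (h : IsCGRun A b x r p) (hA : A.PosSemidef)
    (hb : b ∈ LinearMap.range A.mulVecLin) {k : ℕ} (hk : ∀ i < k, p i ⬝ᵥ r k = 0)
    (hr : r k ≠ 0) : p k ⬝ᵥ A *ᵥ p k ≠ 0 := by
  intro h0
  have hpr := h.dir_dot_res_self hk
  rw [hA.eq_zero_of_mem_range_of_dotProduct_mulVec_self_eq_zero (h.dir_mem_range hb k) h0,
    zero_dotProduct, eq_comm, neg_eq_zero, dotProduct_self_eq_zero] at hpr
  exact hr hpr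

theorem cgOrthogonalUpTo (h : IsCGRun A b x r p) (hA : A.PosSemidef)
    (hb : b ∈ LinearMap.range A.mulVecLin) :
    ∀ k, (∀ j < k, r j ≠ 0) → CGOrthogonalUpTo A r p k
  | 0, _ => fun i _ hij hj => absurd (hij.trans_le hj) (Nat.not_lt_zero i)
  | m + 1, hne => by
    have hm := h.cgOrthogonalUpTo hA hb m fun j hj => hne j (hj.trans m.lt_succ_self)
    have hres : ∀ j ≤ m, r j ≠ 0 := fun j hj => hne j (Nat.lt_succ_of_le hj)
    have hpAp : ∀ j ≤ m, p j ⬝ᵥ A *ᵥ p j ≠ 0 := fun j hj =>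
      h.dir_dot_mulVec_dir_ne_zero hA hb (fun i hi => (hm i j hi hj).2) (hres j hj)
    have horth : ∀ j ≤ m, p j ⬝ᵥ r (m + 1) = 0 := fun j hj =>
      h.dir_dot_res_succ_eq_zero hm (hpAp m le_rfl) hj
    intro i j hij hj
    rcases hj.lt_or_eq with hj | rfl
    · exact hm i j hij (Nat.lt_succ_iff.mp hj)
    · have hi := Nat.lt_succ_iff.mp hij
      exact ⟨h.dir_dot_mulVec_dir_succ_eq_zero hA.isSymm_s7 hm hres hpAp
        horth hi, horth i hi⟩

theorem res_dot_res_eq_zero (h : IsCGRun A b x r p) (hA : A.PosSemidef)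
    (hb : b ∈ LinearMap.range A.mulVecLin) {i j : ℕ} (hij : i < j) (hne : ∀ l < j, r l ≠ 0) :
    r i ⬝ᵥ r j = 0 :=
  h.res_dot_eq_zero fun l hl => (h.cgOrthogonalUpTo hA hb j hne l j (hl.trans_lt hij) le_rfl).2

theorem exists_le_rank_res_eq_zero (h : IsCGRun A b x r p) (hA : A.PosSemidef)
    (hb : b ∈ LinearMap.range A.mulVecLin) : ∃ k ≤ A.rank, r k = 0 := by
  by_contra! hne
  have horth : ∀ i j, i < j → j ≤ A.rank → r i ⬝ᵥ r j = 0 := fun i j hij hj =>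
    h.res_dot_res_eq_zero hA hb hij fun l hl => hne l (hl.le.trans hj)
  have hli : LinearIndependent ℝ fun i : Fin (A.rank + 1) => r i :=
    linearIndependent_of_ne_zero_of_dotProduct_eq_zero (fun i => hne i (Nat.lt_succ_iff.mp i.2))
      fun i j hij => (lt_or_gt_of_ne hij).elim
        (fun hlt => horth i j hlt (Nat.lt_succ_iff.mp j.2))
        fun hgt => (dotProduct_comm _ _).trans (horth j i hgt (Nat.lt_succ_iff.mp i.2))
  have hcard := A.card_le_rank_of_linearIndependent hli fun i => h.res_mem_range hb i
  rw [Fintype.card_fin] at hcard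
  omega

end IsCGRun

end ConjugateGradient

/-- the CG method applied to a PSD quadratic with `b ∈ range A`
terminates (`A p^k = 0`) at some iteration `k ≤ rank A`, with `∇f(x^k) = A x^k − b = 0`,
i.e. `x^k` optimal. -/
theorem stmt7 {n : ℕ} (A : Matrix (Fin n) (Fin n) ℝ) (b : Fin n → ℝ)
    (hA : A.PosSemidef) (hb : ∃ z, A.mulVec z = b)
    (x r p : ℕ → (Fin n → ℝ))
    (hr0 : r 0 = A.mulVec (x 0) - b)
    (hp0 : p 0 = -r 0)
    (hx : ∀ k, x (k + 1) =
      x k + ((r k ⬝ᵥ r k) / (p k ⬝ᵥ A.mulVec (p k))) • p k)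
    (hr : ∀ k, r (k + 1) =
      r k + ((r k ⬝ᵥ r k) / (p k ⬝ᵥ A.mulVec (p k))) • A.mulVec (p k))
    (hp : ∀ k, p (k + 1) =
      -r (k + 1) + ((r (k + 1) ⬝ᵥ r (k + 1)) / (r k ⬝ᵥ r k)) • p k) :
    ∃ k ≤ A.rank, A.mulVec (p k) = 0 ∧ A.mulVec (x k) - b = 0 ∧
      ∀ y, quadObj A b (x k) ≤ quadObj A b y := by
  have hcg : IsCGRun A b x r p := ⟨hr0, hp0, hx, hr, hp⟩
  obtain ⟨k, hk, hrk⟩ := hcg.exists_le_rank_res_eq_zero hA hb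
  have hgrad : A *ᵥ x k - b = 0 := hcg.res_eq k ▸ hrk
  refine ⟨k, hk, ?_, hgrad, hA.quadObj_le_of_mulVec_eq (sub_eq_zero.mp hgrad)⟩
  rw [hcg.dir_eq_zero_of_res_eq_zero hrk, mulVec_zero]
end

section
/- Consider the conjugate gradient method applied to f(x) = (1/2)xᵀAx − bᵀx with A symmetric positive semidefinite. If b ∉ range(A), then the method terminates at some iteration k with 0 ≤ k ≤ rank(A)+1 at a point with Ap^k = 0 and (r^k)ᵀp^k = −‖r^k‖² < 0, so f(x^k + α p^k) = f(x^k) + α (r^k)ᵀ p^k → −∞ as α → ∞. -/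
open Matrix

private lemma dot_sum_aux {n : ℕ} {ι : Type*} (v : Fin n → ℝ) (s : Finset ι)
    (w : ι → Fin n → ℝ) : v ⬝ᵥ (∑ i ∈ s, w i) = ∑ i ∈ s, v ⬝ᵥ w i := by
  simp only [dotProduct, Finset.sum_apply, Finset.mul_sum]
  rw [Finset.sum_comm]

/-- the CG method applied to a PSD quadratic with `b ∉ range A`
terminates (`A p^k = 0`) at some `k ≤ rank A + 1`, with
`(r^k)ᵀ p^k = −‖r^k‖² < 0`, `f(x^k + α p^k) = f(x^k) + α (r^k)ᵀ p^k` and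
`f(x^k + α p^k) → −∞` as `α → ∞`. -/
theorem stmt8 {n : ℕ} (A : Matrix (Fin n) (Fin n) ℝ) (b : Fin n → ℝ)
    (hA : A.PosSemidef) (hb : ¬ ∃ z, A.mulVec z = b)
    (x r p : ℕ → (Fin n → ℝ))
    (hr0 : r 0 = A.mulVec (x 0) - b)
    (hp0 : p 0 = -r 0)
    (hx : ∀ k, x (k + 1) =
      x k + ((r k ⬝ᵥ r k) / (p k ⬝ᵥ A.mulVec (p k))) • p k)
    (hr : ∀ k, r (k + 1) =
      r k + ((r k ⬝ᵥ r k) / (p k ⬝ᵥ A.mulVec (p k))) • A.mulVec (p k))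
    (hp : ∀ k, p (k + 1) =
      -r (k + 1) + ((r (k + 1) ⬝ᵥ r (k + 1)) / (r k ⬝ᵥ r k)) • p k) :
    ∃ k ≤ A.rank + 1, A.mulVec (p k) = 0 ∧
      r k ⬝ᵥ p k = -(r k ⬝ᵥ r k) ∧ r k ⬝ᵥ p k < 0 ∧
      (∀ α : ℝ, quadObj A b (x k + α • p k) =
        quadObj A b (x k) + α * (r k ⬝ᵥ p k)) ∧
      Filter.Tendsto (fun α : ℝ => quadObj A b (x k + α • p k))
        Filter.atTop Filter.atBot := by
  -- symmetry of A in dot products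
  have hAt : Aᵀ = A := hA.1
  have hsym : ∀ u v : Fin n → ℝ, u ⬝ᵥ A.mulVec v = v ⬝ᵥ A.mulVec u := by
    intro u v
    rw [dotProduct_mulVec, ← mulVec_transpose, hAt, dotProduct_comm]
  -- invariant r k = A x k - b
  have hinv : ∀ k, r k = A.mulVec (x k) - b := by
    intro k
    induction k with
    | zero => exact hr0
    | succ k ih =>
      rw [hr k, hx k, mulVec_add, mulVec_smul, ih]
      abel
  -- residuals never vanish
  have hrne : ∀ k, r k ≠ 0 := by
    intro k h
    apply hb
    refine ⟨x k, ?_⟩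
    have h2 := hinv k
    rw [h] at h2
    exact sub_eq_zero.mp h2.symm
  have hgpos : ∀ k, 0 < r k ⬝ᵥ r k := by
    intro k
    have h1 : 0 ≤ r k ⬝ᵥ r k := by
      simp only [dotProduct]
      exact Finset.sum_nonneg fun i _ => mul_self_nonneg _
    rcases h1.lt_or_eq with h | h
    · exact h
    · exact absurd (dotProduct_self_eq_zero.mp h.symm) (hrne k)
  -- main CG orthogonality induction
  have key : ∀ k, (∀ i, i < k → p i ⬝ᵥ A.mulVec (p i) ≠ 0) →
      (∀ i, i < k → r k ⬝ᵥ p i = 0) ∧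
      (∀ i, i < k → r k ⬝ᵥ r i = 0) ∧
      (∀ i, i < k → p k ⬝ᵥ A.mulVec (p i) = 0) ∧
      r k ⬝ᵥ p k = -(r k ⬝ᵥ r k) := by
    intro k
    induction k with
    | zero =>
      intro _
      refine ⟨fun i hi => absurd hi (Nat.not_lt_zero i),
        fun i hi => absurd hi (Nat.not_lt_zero i),
        fun i hi => absurd hi (Nat.not_lt_zero i), ?_⟩
      rw [hp0]
      simp [dotProduct_neg]
    | succ k ih =>
      intro hgood
      have hgk : ∀ i, i < k → p i ⬝ᵥ A.mulVec (p i) ≠ 0 :=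
        fun i hi => hgood i (Nat.lt_succ_of_lt hi)
      obtain ⟨ih1, ih2, ih3, ih4⟩ := ih hgk
      have hdk : p k ⬝ᵥ A.mulVec (p k) ≠ 0 := hgood k (Nat.lt_succ_self k)
      -- r(k+1) ⟂ p i, i ≤ k
      have hrp : ∀ i, i ≤ k → r (k + 1) ⬝ᵥ p i = 0 := by
        intro i hi
        rw [hr k, add_dotProduct, smul_dotProduct, smul_eq_mul]
        have hAc : A.mulVec (p k) ⬝ᵥ p i = p k ⬝ᵥ A.mulVec (p i) := by
          rw [dotProduct_comm, hsym]
        rw [hAc]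
        rcases Nat.lt_or_ge i k with h | h
        · rw [ih1 i h, ih3 i h, mul_zero, add_zero]
        · have hik : i = k := le_antisymm hi h
          subst hik
          rw [ih4, div_mul_cancel₀ _ hdk]
          ring
      -- r(k+1) ⟂ r i, i ≤ k
      have hrr : ∀ i, i ≤ k → r (k + 1) ⬝ᵥ r i = 0 := by
        intro i hi
        cases i with
        | zero =>
          have : r 0 = -p 0 := by rw [hp0, neg_neg]
          rw [this, dotProduct_neg, hrp 0 (Nat.zero_le k), neg_zero]
        | succ j =>
          have hrj : r (j + 1) = -p (j + 1) +
              ((r (j + 1) ⬝ᵥ r (j + 1)) / (r j ⬝ᵥ r j)) • p j := by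
            rw [hp j]; abel
          rw [hrj, dotProduct_add, dotProduct_neg, dotProduct_smul, smul_eq_mul,
            hrp (j + 1) hi, hrp j (le_of_lt hi), neg_zero, mul_zero, add_zero]
      -- conjugacy p(k+1) ⟂_A p i, i ≤ k
      have hApi : ∀ i, i ≤ k → A.mulVec (p i) =
          ((r i ⬝ᵥ r i) / (p i ⬝ᵥ A.mulVec (p i)))⁻¹ • (r (i + 1) - r i) := by
        intro i hi
        have hci : (r i ⬝ᵥ r i) / (p i ⬝ᵥ A.mulVec (p i)) ≠ 0 := by
          rcases Nat.lt_or_ge i k with h | h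
          · exact div_ne_zero (hgpos i).ne' (hgk i h)
          · have : i = k := le_antisymm hi h
            subst this
            exact div_ne_zero (hgpos i).ne' hdk
        have h1 : ((r i ⬝ᵥ r i) / (p i ⬝ᵥ A.mulVec (p i))) • A.mulVec (p i) =
            r (i + 1) - r i := by rw [hr i]; abel
        rw [← h1, inv_smul_smul₀ hci]
      have hconj : ∀ i, i ≤ k → p (k + 1) ⬝ᵥ A.mulVec (p i) = 0 := by
        intro i hi
        rw [hp k, add_dotProduct, neg_dotProduct, smul_dotProduct, smul_eq_mul]
        rcases Nat.lt_or_ge i k with h | h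
        · rw [ih3 i h, mul_zero, add_zero, hApi i hi, dotProduct_smul,
            dotProduct_sub, hrr (i + 1) h, hrr i (le_of_lt h)]
          simp
        · have hik : i = k := le_antisymm hi h
          subst hik
          have hpr1 : p i ⬝ᵥ r (i + 1) = 0 := by
            rw [dotProduct_comm]; exact hrp i le_rfl
          have hpr2 : p i ⬝ᵥ r i = -(r i ⬝ᵥ r i) := by
            rw [dotProduct_comm]; exact ih4
          rw [hApi i le_rfl]
          simp only [dotProduct_smul, dotProduct_sub, smul_eq_mul,
            hrr i le_rfl, hpr1, hpr2, sub_zero, zero_sub, neg_neg]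
          have hgi := (hgpos i).ne'
          field_simp
          ring
      refine ⟨fun i hi => hrp i (Nat.lt_succ_iff.mp hi),
        fun i hi => hrr i (Nat.lt_succ_iff.mp hi),
        fun i hi => hconj i (Nat.lt_succ_iff.mp hi), ?_⟩
      rw [hp (k := k), dotProduct_add, dotProduct_neg, dotProduct_smul,
        smul_eq_mul, hrp k le_rfl, mul_zero, add_zero]
  -- termination within rank steps
  have hterm : ∃ k, p k ⬝ᵥ A.mulVec (p k) = 0 := by
    by_contra h
    push_neg at h
    have hgoodall : ∀ m, ∀ i, i < m → p i ⬝ᵥ A.mulVec (p i) ≠ 0 :=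
      fun m i _ => h i
    -- conjugacy for all distinct pairs
    have hc : ∀ i j : ℕ, i ≠ j → p i ⬝ᵥ A.mulVec (p j) = 0 := by
      intro i j hij
      rcases Nat.lt_or_ge j i with hlt | hge
      · exact (key i (hgoodall i)).2.2.1 j hlt
      · have hlt : i < j := lt_of_le_of_ne hge hij
        rw [hsym]
        exact (key j (hgoodall j)).2.2.1 i hlt
    have hli : LinearIndependent ℝ (fun i : Fin (A.rank + 1) => A.mulVec (p i)) := by
      rw [Fintype.linearIndependent_iff]
      intro c hc0 j
      have hdot := congrArg (fun v => p (j : ℕ) ⬝ᵥ v) hc0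
      simp only [dot_sum_aux, dotProduct_smul, smul_eq_mul, dotProduct_zero] at hdot
      rw [Finset.sum_eq_single j] at hdot
      · rcases mul_eq_zero.mp hdot with h' | h'
        · exact h'
        · exact absurd h' (h j)
      · intro i _ hij
        rw [hc (j : ℕ) (i : ℕ) (fun e => hij (Fin.val_injective e).symm), mul_zero]
      · intro hj; exact absurd (Finset.mem_univ j) hj
    have hliv : LinearIndependent ℝ
        (fun i : Fin (A.rank + 1) =>
          (⟨A.mulVec (p i), ⟨p i, rfl⟩⟩ : LinearMap.range A.mulVecLin)) := by
      apply LinearIndependent.of_comp (LinearMap.range A.mulVecLin).subtype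
      exact hli
    have hcard := hliv.fintype_card_le_finrank
    rw [Fintype.card_fin] at hcard
    have : Module.finrank ℝ (LinearMap.range A.mulVecLin) = A.rank := rfl
    omega
  classical
  let k₀ := Nat.find hterm
  have hd0 : p k₀ ⬝ᵥ A.mulVec (p k₀) = 0 := Nat.find_spec hterm
  have hgood0 : ∀ i, i < k₀ → p i ⬝ᵥ A.mulVec (p i) ≠ 0 :=
    fun i hi => Nat.find_min hterm hi
  -- bound k₀ ≤ rank + 1 (in fact ≤ rank)
  have hk0le : k₀ ≤ A.rank + 1 := by
    by_contra hgt
    push_neg at hgt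
    -- then good (rank+2) ⊇ good up to rank+1, same dimension argument
    have hgoodall : ∀ i, i ≤ A.rank → p i ⬝ᵥ A.mulVec (p i) ≠ 0 :=
      fun i hi => hgood0 i (by omega)
    have hc : ∀ i j : ℕ, i ≤ A.rank → j ≤ A.rank → i ≠ j →
        p i ⬝ᵥ A.mulVec (p j) = 0 := by
      intro i j hi hj hij
      rcases Nat.lt_or_ge j i with hlt | hge
      · exact (key i (fun m hm => hgood0 m (by omega))).2.2.1 j hlt
      · have hlt : i < j := lt_of_le_of_ne hge hij
        rw [hsym]
        exact (key j (fun m hm => hgood0 m (by omega))).2.2.1 i hlt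
    have hli : LinearIndependent ℝ (fun i : Fin (A.rank + 1) => A.mulVec (p i)) := by
      rw [Fintype.linearIndependent_iff]
      intro c hc0 j
      have hdot := congrArg (fun v => p (j : ℕ) ⬝ᵥ v) hc0
      simp only [dot_sum_aux, dotProduct_smul, smul_eq_mul, dotProduct_zero] at hdot
      rw [Finset.sum_eq_single j] at hdot
      · rcases mul_eq_zero.mp hdot with h' | h'
        · exact h'
        · exact absurd h' (hgoodall j (Nat.lt_succ_iff.mp j.isLt))
      · intro i _ hij
        rw [hc (j : ℕ) (i : ℕ) (Nat.lt_succ_iff.mp j.isLt) (Nat.lt_succ_iff.mp i.isLt)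
          (fun e => hij (Fin.val_injective e).symm), mul_zero]
      · intro hj; exact absurd (Finset.mem_univ j) hj
    have hliv : LinearIndependent ℝ
        (fun i : Fin (A.rank + 1) =>
          (⟨A.mulVec (p i), ⟨p i, rfl⟩⟩ : LinearMap.range A.mulVecLin)) := by
      apply LinearIndependent.of_comp (LinearMap.range A.mulVecLin).subtype
      exact hli
    have hcard := hliv.fintype_card_le_finrank
    rw [Fintype.card_fin] at hcard
    have : Module.finrank ℝ (LinearMap.range A.mulVecLin) = A.rank := rfl
    omega
  obtain ⟨_, _, _, hrpk⟩ := key k₀ hgood0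
  -- A p k₀ = 0
  have hAp0 : A.mulVec (p k₀) = 0 := by
    have := (hA.dotProduct_mulVec_zero_iff (p k₀)).mp
    apply this
    simpa using hd0
  have hneg : r k₀ ⬝ᵥ p k₀ < 0 := by
    rw [hrpk]; exact neg_neg_of_pos (hgpos k₀) |>.trans_le le_rfl
  -- f along the ray
  have hexp : ∀ α : ℝ, quadObj A b (x k₀ + α • p k₀) =
      quadObj A b (x k₀) + α * (r k₀ ⬝ᵥ p k₀) := by
    intro α
    have h1 : A.mulVec (x k₀ + α • p k₀) = A.mulVec (x k₀) := by
      rw [mulVec_add, mulVec_smul, hAp0, smul_zero, add_zero]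
    have h2 : p k₀ ⬝ᵥ A.mulVec (x k₀) = 0 := by
      rw [hsym, hAp0, dotProduct_zero]
    have h3 : r k₀ ⬝ᵥ p k₀ = -(b ⬝ᵥ p k₀) := by
      rw [hinv k₀, sub_dotProduct, dotProduct_comm (A.mulVec (x k₀)), h2, zero_sub]
    unfold quadObj
    rw [h1, add_dotProduct, smul_dotProduct, smul_eq_mul, h2, mul_zero, add_zero,
      dotProduct_add, dotProduct_smul, smul_eq_mul, h3]
    ring
  refine ⟨k₀, hk0le, hAp0, hrpk, hneg, hexp, ?_⟩
  have htb : Filter.Tendsto (fun α : ℝ =>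
      quadObj A b (x k₀) + α * (r k₀ ⬝ᵥ p k₀)) Filter.atTop Filter.atBot :=
    Filter.tendsto_atBot_add_const_left _ _
      ((Filter.tendsto_mul_const_atBot_of_neg hneg).mpr Filter.tendsto_id)
  exact htb.congr fun α => (hexp α).symm
end

section
/- For the CG method applied to convex quadratic f(x) = (1/2)xᵀAx − bᵀx with A symmetric positive semidefinite: if Ap^k ≠ 0 for some k ≥ 0, then r^k ≠ 0. Consequently (since (p^k)ᵀAp^k ≠ 0 iff Ap^k ≠ 0 for PSD A), the CG method is well defined (no division by zero occurs). -/
open Matrix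

/-- for the CG method applied to a PSD quadratic, if `A p^k ≠ 0` then
`r^k ≠ 0` and `(p^k)ᵀ A p^k ≠ 0`; hence the method is well defined
(no division by zero occurs in `α_k` or `β_{k+1}`). -/
theorem stmt9 {n : ℕ} (A : Matrix (Fin n) (Fin n) ℝ) (b : Fin n → ℝ)
    (hA : A.PosSemidef)
    (x r p : ℕ → (Fin n → ℝ))
    (hr0 : r 0 = A.mulVec (x 0) - b)
    (hp0 : p 0 = -r 0)
    (hx : ∀ k, x (k + 1) =
      x k + ((r k ⬝ᵥ r k) / (p k ⬝ᵥ A.mulVec (p k))) • p k)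
    (hr : ∀ k, r (k + 1) =
      r k + ((r k ⬝ᵥ r k) / (p k ⬝ᵥ A.mulVec (p k))) • A.mulVec (p k))
    (hp : ∀ k, p (k + 1) =
      -r (k + 1) + ((r (k + 1) ⬝ᵥ r (k + 1)) / (r k ⬝ᵥ r k)) • p k) :
    ∀ k, A.mulVec (p k) ≠ 0 →
      r k ≠ 0 ∧ p k ⬝ᵥ A.mulVec (p k) ≠ 0 ∧ r k ⬝ᵥ r k ≠ 0 := by
  intro k hAp
  have hrk : r k ≠ 0 := by
    intro hrz
    have hrr : r k ⬝ᵥ r k = 0 := by rw [hrz]; simp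
    have hpz : p k = 0 := by
      cases k with
      | zero => rw [hp0, hrz]; simp
      | succ m => rw [hp m, hrz]; simp
    exact hAp (by rw [hpz, mulVec_zero])
  have hrr : r k ⬝ᵥ r k ≠ 0 := fun h =>
    hrk ((dotProduct_self_eq_zero).mp h)
  refine ⟨hrk, ?_, hrr⟩
  intro h
  apply hAp
  have := (hA.dotProduct_mulVec_zero_iff (p k)).mp
  simpa using this (by simpa using h)
end

section
/- Let f(x) = (1/2)xᵀAx − bᵀx with A symmetric positive semidefinite and ‖A‖ the spectral norm, τ ≥ 0, t ∈ (0, 2/‖A‖), and F(x) = f(x) + τ‖x‖₁. Given y ∈ ℝⁿ, let H = {x : xᵢ = 0 whenever yᵢ = 0} and let x⁺ = argmin{ (1/2)‖x − (y − t(Ay − b))‖² + tτ‖x‖₁ : x ∈ H }. Then F(y) ≥ F(x⁺) + (1/2)(2/t − ‖A‖)‖x⁺ − y‖²; in particular F(x⁺) ≤ F(y). -/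
open Matrix

/-!
The proximal objective `φ z = ½‖z - (y - t∇f(y))‖² + tτ‖z‖₁` is `1`-strongly convex on the
subspace `H`, which contains both `y` and `x⁺`. Comparing `φ` along the segment from `x⁺` to `y`
gives `φ x⁺ + ½‖x⁺ - y‖² ≤ φ y`, i.e. `⟨∇f(y), x⁺ - y⟩ + τ‖x⁺‖₁ + t⁻¹‖x⁺ - y‖² ≤ τ‖y‖₁`.
Adding the descent lemma `f x⁺ ≤ f y + ⟨∇f(y), x⁺ - y⟩ + (‖A‖/2)‖x⁺ - y‖²` gives the estimate,
and `t < 2/‖A‖` makes its coefficient `2/t - ‖A‖` positive.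
-/

open Set Filter Topology

lemma add_le_of_forall_le_convexComb_sub {Q P D : ℝ}
    (h : ∀ s : ℝ, 0 < s → s ≤ 1 → Q ≤ (1 - s) * Q + s * P - (1 - s) * s * D) : Q + D ≤ P := by
  have hlim : Tendsto (fun s : ℝ => Q + (1 - s) * D) (𝓝[>] 0) (𝓝 (Q + D)) := by
    refine tendsto_nhdsWithin_of_tendsto_nhds ?_
    have hcont : Continuous fun s : ℝ => Q + (1 - s) * D := by fun_prop
    simpa using hcont.tendsto 0
  refine le_of_tendsto hlim ?_
  filter_upwards [Ioc_mem_nhdsGT one_pos] with s ⟨hs0, hs1⟩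
  refine le_of_mul_le_mul_left ?_ hs0
  linarith [h s hs0 hs1]

section

variable {ι : Type*}

lemma convex_setOf_forall_eq_zero_imp_eq_zero (y : ι → ℝ) :
    Convex ℝ {z : ι → ℝ | ∀ i, y i = 0 → z i = 0} := by
  intro u hu v hv a b _ _ _ i hi
  simp [hu i hi, hv i hi]

variable [Fintype ι]

lemma dotProduct_self_convexComb {R : Type*} [CommRing R] (u v : ι → R) {a b : R}
    (hab : a + b = 1) :
    (a • u + b • v) ⬝ᵥ (a • u + b • v) =
      a * (u ⬝ᵥ u) + b * (v ⬝ᵥ v) - a * b * ((u - v) ⬝ᵥ (u - v)) := by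
  simp only [add_dotProduct, dotProduct_add, sub_dotProduct, dotProduct_sub, smul_dotProduct,
    dotProduct_smul, smul_eq_mul, dotProduct_comm v u]
  linear_combination (a * (u ⬝ᵥ u) + b * (v ⬝ᵥ v)) * hab

lemma convexOn_sum_abs : ConvexOn ℝ univ (fun x : ι → ℝ => ∑ i, |x i|) := by
  refine ⟨convex_univ, fun x _ y _ a b ha hb _ => ?_⟩
  simp only [Pi.add_apply, Pi.smul_apply, smul_eq_mul, Finset.mul_sum, ← Finset.sum_add_distrib]
  gcongr with i
  calc |a * x i + b * y i| ≤ |a * x i| + |b * y i| := abs_add_le _ _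
    _ = a * |x i| + b * |y i| := by rw [abs_mul, abs_mul, abs_of_nonneg ha, abs_of_nonneg hb]

lemma dotProduct_mulVec_le_norm_toEuclideanCLM [DecidableEq ι] (A : Matrix ι ι ℝ)
    (x : ι → ℝ) : x ⬝ᵥ A *ᵥ x ≤ ‖toEuclideanCLM (𝕜 := ℝ) A‖ * (x ⬝ᵥ x) := by
  set T := toEuclideanCLM (𝕜 := ℝ) A
  set v : EuclideanSpace ℝ ι := WithLp.toLp 2 x
  have hquad : x ⬝ᵥ A *ᵥ x = inner ℝ v (T v) := (inner_toEuclideanCLM A v v).symm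
  have hsq : x ⬝ᵥ x = ‖v‖ ^ 2 := by
    rw [← real_inner_self_eq_norm_sq, EuclideanSpace.inner_toLp_toLp, star_trivial]
  calc x ⬝ᵥ A *ᵥ x ≤ ‖v‖ * ‖T v‖ := hquad ▸ real_inner_le_norm v (T v)
    _ ≤ ‖v‖ * (‖T‖ * ‖v‖) := by gcongr; exact T.le_opNorm v
    _ = ‖T‖ * (x ⬝ᵥ x) := by rw [hsq]; ring

lemma IsMinOn.half_dotProduct_add_le {S : Set (ι → ℝ)} {g : (ι → ℝ) → ℝ} {c x y : ι → ℝ}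
    (hg : ConvexOn ℝ S g) (hx : x ∈ S) (hy : y ∈ S)
    (hmin : IsMinOn (fun z => 1 / 2 * ((z - c) ⬝ᵥ (z - c)) + g z) S x) :
    1 / 2 * ((x - c) ⬝ᵥ (x - c)) + g x + 1 / 2 * ((x - y) ⬝ᵥ (x - y)) ≤
      1 / 2 * ((y - c) ⬝ᵥ (y - c)) + g y := by
  refine add_le_of_forall_le_convexComb_sub fun s hs0 hs1 => ?_
  have hsum : (1 - s) + s = 1 := by ring
  have hz : (1 - s) • x + s • y ∈ S := hg.1 hx hy (by linarith) hs0.le hsum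
  have hquad := dotProduct_self_convexComb (x - c) (y - c) hsum
  rw [show (1 - s) • (x - c) + s • (y - c) = (1 - s) • x + s • y - c by
      rw [smul_sub, smul_sub, sub_add_sub_comm, ← add_smul, hsum, one_smul],
    sub_sub_sub_cancel_right] at hquad
  have hgz := hg.2 hx hy (by linarith) hs0.le hsum
  have hmin_z := isMinOn_iff.1 hmin _ hz
  simp only [smul_eq_mul] at hgz hmin_z
  linear_combination hmin_z + hgz + 1 / 2 * hquad

lemma IsMinOn.dotProduct_sub_add_le {S : Set (ι → ℝ)} {h : (ι → ℝ) → ℝ} {g x y : ι → ℝ}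
    {t : ℝ} (ht : 0 < t) (hh : ConvexOn ℝ S h) (hx : x ∈ S) (hy : y ∈ S)
    (hmin : IsMinOn (fun z => 1 / 2 * ((z - (y - t • g)) ⬝ᵥ (z - (y - t • g))) + t * h z) S x) :
    (x - y) ⬝ᵥ g + h x + t⁻¹ * ((x - y) ⬝ᵥ (x - y)) ≤ h y := by
  have hprox := hmin.half_dotProduct_add_le (hh.smul ht.le) hx hy
  rw [show x - (y - t • g) = (x - y) + t • g by abel, show y - (y - t • g) = t • g by abel]
    at hprox
  simp only [add_dotProduct, dotProduct_add, smul_dotProduct, dotProduct_smul, smul_eq_mul,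
    dotProduct_comm g (x - y)] at hprox
  refine le_of_mul_le_mul_left ?_ ht
  rw [mul_add, mul_add, mul_inv_cancel_left₀ ht.ne']
  linarith

end

lemma quadObj_eq_add {n : ℕ} {A : Matrix (Fin n) (Fin n) ℝ} (hA : A.IsSymm)
    (b x y : Fin n → ℝ) :
    quadObj A b x =
      quadObj A b y + (x - y) ⬝ᵥ (A *ᵥ y - b) + 1 / 2 * ((x - y) ⬝ᵥ A *ᵥ (x - y)) := by
  obtain ⟨d, rfl⟩ : ∃ d, x = y + d := ⟨x - y, by abel⟩
  have hsymm : y ⬝ᵥ A *ᵥ d = d ⬝ᵥ A *ᵥ y := by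
    rw [dotProduct_mulVec, dotProduct_comm, ← vecMul_transpose, hA.eq]
  simp only [quadObj, add_sub_cancel_left, mulVec_add, dotProduct_add, add_dotProduct, hsymm,
    dotProduct_sub, dotProduct_comm b]
  ring

lemma quadObj_le_add {n : ℕ} {A : Matrix (Fin n) (Fin n) ℝ} (hA : A.IsSymm)
    (b x y : Fin n → ℝ) :
    quadObj A b x ≤ quadObj A b y + (x - y) ⬝ᵥ (A *ᵥ y - b) +
      ‖toEuclideanCLM (𝕜 := ℝ) A‖ / 2 * ((x - y) ⬝ᵥ (x - y)) := by
  rw [quadObj_eq_add hA b x y]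
  linarith [dotProduct_mulVec_le_norm_toEuclideanCLM A (x - y)]

/-- a proximal gradient step restricted to the subspace
`H = {x : xᵢ = 0 whenever yᵢ = 0}` with stepsize `t ∈ (0, 2/‖A‖)` satisfies
`F(y) ≥ F(x⁺) + (1/2)(2/t − ‖A‖)‖x⁺ − y‖²`, in particular `F(x⁺) ≤ F(y)`. -/
theorem stmt17 {n : ℕ} (A : Matrix (Fin n) (Fin n) ℝ) (b : Fin n → ℝ) (τ : ℝ)
    (hA : A.PosSemidef) (hτ : 0 ≤ τ)
    (t : ℝ) (ht0 : 0 < t) (ht2 : t < 2 / ‖Matrix.toEuclideanCLM (𝕜 := ℝ) A‖)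
    (y xp : Fin n → ℝ)
    (hfeas : ∀ i, y i = 0 → xp i = 0)
    (hopt : ∀ z : Fin n → ℝ, (∀ i, y i = 0 → z i = 0) →
      (1 / 2) * ((xp - (y - t • (A.mulVec y - b))) ⬝ᵥ (xp - (y - t • (A.mulVec y - b)))) +
          t * τ * ∑ i, |xp i| ≤
        (1 / 2) * ((z - (y - t • (A.mulVec y - b))) ⬝ᵥ (z - (y - t • (A.mulVec y - b)))) +
          t * τ * ∑ i, |z i|) :
    l1QuadObj A b τ y ≥ l1QuadObj A b τ xp +
      (1 / 2) * (2 / t - ‖Matrix.toEuclideanCLM (𝕜 := ℝ) A‖) * ((xp - y) ⬝ᵥ (xp - y)) ∧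
    l1QuadObj A b τ xp ≤ l1QuadObj A b τ y := by
  set L := ‖toEuclideanCLM (𝕜 := ℝ) A‖
  set D := (xp - y) ⬝ᵥ (xp - y)
  have hl1 : ConvexOn ℝ {z | ∀ i, y i = 0 → z i = 0} fun z : Fin n → ℝ => τ * ∑ i, |z i| :=
    (convexOn_sum_abs.subset (subset_univ _) (convex_setOf_forall_eq_zero_imp_eq_zero y)).smul hτ
  have hstep := IsMinOn.dotProduct_sub_add_le ht0 hl1 hfeas (fun _ h => h)
    (isMinOn_iff.2 fun z hz => by simpa only [mul_assoc] using hopt z hz)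
  have hdesc := quadObj_le_add (isHermitian_iff_isSymm.1 hA.isHermitian) b xp y
  have hmain : l1QuadObj A b τ y ≥ l1QuadObj A b τ xp + 1 / 2 * (2 / t - L) * D := by
    rw [show 1 / 2 * (2 / t - L) * D = t⁻¹ * D - L / 2 * D by ring]
    unfold l1QuadObj
    linarith
  have hL : L < 2 / t := by
    rcases (norm_nonneg _ : 0 ≤ L).eq_or_lt with hL0 | hL0
    · rw [show L = 0 from hL0.symm]; positivity
    · exact (lt_div_comm₀ ht0 hL0).1 ht2
  have hD : 0 ≤ D := by
    simpa only [star_trivial] using dotProduct_self_star_nonneg (xp - y)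
  exact ⟨hmain, by linarith [mul_nonneg (mul_nonneg one_half_pos.le (sub_nonneg.2 hL.le)) hD]⟩
end
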